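/- arXiv:1808.01464 — 9 statements merged into one kernel-verified Lean document; each statement's English description precedes it below -/
import Mathlib

section
/- Let A be a vector space over a field K and α : A → A a linear map. For f ∈ C^m_α(A,A), g ∈ C^n_α(A,A), h ∈ C^p_α(A,A) and indices 1 ≤ i ≤ m, 1 ≤ j ≤ n, the α-twisted partial compositions satisfy the vertical (sequential) associativity relation (f ∘_i g) ∘_{i+j-1} h = f ∘_i (g ∘_j h). -/
/-- The cochain on `ℕ`-indexed tuples induced by a multilinear map `Aᵐ → A`
(an element of the Hochschild-type cochain space). -/
def toCochain {K A : Type*} [Field K] [AddCommGroup A] [Module K A] (m : ℕ)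
    (f : MultilinearMap K (fun _ : Fin m => A) A) : (ℕ → A) → A :=
  fun a => f fun j => a j

/-- The `α`-twisted partial composition `f ∘ᵢ g`, where `n` is the arity of `g`
and `i` is the (1-indexed) insertion position:
`(f ∘ᵢ g)(a₁,…) = f(α^[n-1] a₁, …, α^[n-1] a_{i-1}, g(a_i,…,a_{i+n-1}), α^[n-1] a_{i+n}, …)`. -/
def pcomp {A : Type*} (α : A → A) (n : ℕ) (f g : (ℕ → A) → A) (i : ℕ) : (ℕ → A) → A :=
  fun a => f fun j =>
    if j + 1 < i then α^[n - 1] (a j)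
    else if j + 1 = i then g fun k => a (i - 1 + k)
    else α^[n - 1] (a (j + n - 1))

/-- The `α`-twisted circle product
`(f ∘ g)(a₁,…) = ∑_{i=1}^{m} (-1)^{(n-1)(i-1)} f(α^[n-1] a₁, …, g(a_i,…,a_{i+n-1}), …)`,
where `m` is the arity of `f` and `n` the arity of `g`. -/
def circ {A : Type*} [AddCommGroup A] (α : A → A) (m n : ℕ) (f g : (ℕ → A) → A) :
    (ℕ → A) → A :=
  fun a => ∑ i ∈ Finset.range m, ((-1 : ℤ) ^ ((n - 1) * i)) • pcomp α n f g (i + 1) a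

/-- The `α`-twisted cup product
`(f ∪ g)(a₁,…,a_{m+n}) = μ(f(α^[n-1] a₁,…,α^[n-1] a_m), g(α^[m-1] a_{m+1},…,α^[m-1] a_{m+n}))`. -/
def cup {A : Type*} (μ : A → A → A) (α : A → A) (m n : ℕ) (f g : (ℕ → A) → A) :
    (ℕ → A) → A :=
  fun a => μ (f fun j => α^[n - 1] (a j)) (g fun j => α^[m - 1] (a (m + j)))

/-- The Hochschild-type coboundary of a hom-associative algebra `(A, μ, α)`:
`(δ f)(a₁,…,a_{n+1}) = μ(α^[n-1] a₁, f(a₂,…,a_{n+1}))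
  + ∑_{i=1}^{n} (-1)^i f(α a₁,…, μ(a_i,a_{i+1}), …, α a_{n+1})
  + (-1)^{n+1} μ(f(a₁,…,a_n), α^[n-1] a_{n+1})`. -/
def hdelta {A : Type*} [AddCommGroup A] (μ : A → A → A) (α : A → A) (n : ℕ)
    (f : (ℕ → A) → A) : (ℕ → A) → A :=
  fun a =>
    μ (α^[n - 1] (a 0)) (f fun j => a (j + 1))
      + ∑ i ∈ Finset.range n, ((-1 : ℤ) ^ (i + 1)) •
          f (fun j => if j < i then α (a j)
            else if j = i then μ (a i) (a (i + 1)) else α (a (j + 1)))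
      + ((-1 : ℤ) ^ (n + 1)) • μ (f a) (α^[n - 1] (a n))

/-- The degree `-1` graded Lie bracket `[f,g] = f ∘ g - (-1)^{(m-1)(n-1)} g ∘ f`. -/
def brkt {A : Type*} [AddCommGroup A] (α : A → A) (m n : ℕ) (f g : (ℕ → A) → A) :
    (ℕ → A) → A :=
  fun a => circ α m n f g a - ((-1 : ℤ) ^ ((m - 1) * (n - 1))) • circ α n m g f a

/-- The dot product `f · g = (-1)^{mn} f ∪ g`. -/
def dotp {A : Type*} [AddCommGroup A] (μ : A → A → A) (α : A → A) (m n : ℕ)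
    (f g : (ℕ → A) → A) : (ℕ → A) → A :=
  fun a => ((-1 : ℤ) ^ (m * n)) • cup μ α m n f g a
/-! Both sides apply `f` to the same tuple, compared position by position: before and after
the block of `g` both give `α` iterated `(n - 1) + (p - 1)` times on the matching entry of `a`,
and inside that block both give the argument tuple of `g ∘ⱼ h`. Since `j ≤ n`, `h` is inserted
inside the block of `g`; the rest is index arithmetic. -/

theorem pcomp_pcomp_of_le {A : Type*} (α : A → A) (F G H : (ℕ → A) → A) {n p i j : ℕ}
    (hp : 1 ≤ p) (hj : 1 ≤ j) (hjn : j ≤ n) :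
    pcomp α p (pcomp α n F G i) H (i + j - 1) = pcomp α (n + p - 1) F (pcomp α p G H j) i := by
  funext a
  simp only [pcomp]
  congr 1
  funext s
  rcases lt_trichotomy (s + 1) i with hs | rfl | hs
  · rw [if_pos hs, if_pos hs, if_pos (by omega), ← Function.iterate_add_apply]
    congr 1
    omega
  · simp only [lt_irrefl, if_false, if_true]
    congr 1
    funext u
    rcases lt_trichotomy (u + 1) j with hu | rfl | hu
    · rw [if_pos hu, if_pos (by omega)]
    · rw [if_neg (by omega), if_pos (by omega), if_neg (by omega), if_pos rfl]
      congr 1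
      funext v
      congr 1
      omega
    · rw [if_neg (by omega), if_neg (by omega), if_neg (by omega), if_neg (by omega)]
      congr 2
      omega
  · rw [if_neg (by omega), if_neg (by omega), if_neg (by omega), if_neg (by omega),
      if_neg (by omega), if_neg (by omega), ← Function.iterate_add_apply]
    congr 2 <;> omega

theorem pcomp_vertical_associativity_general {K A : Type*} [Field K] [AddCommGroup A] [Module K A]
    (α : A →ₗ[K] A) (m n p i j : ℕ) (hp : 1 ≤ p)
    (hj1 : 1 ≤ j) (hj2 : j ≤ n)
    (f : MultilinearMap K (fun _ : Fin m => A) A)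
    (g : MultilinearMap K (fun _ : Fin n => A) A)
    (h : MultilinearMap K (fun _ : Fin p => A) A) :
    ∀ a : ℕ → A,
      pcomp (⇑α) p (pcomp (⇑α) n (toCochain m f) (toCochain n g) i) (toCochain p h)
          (i + j - 1) a
        = pcomp (⇑α) (n + p - 1) (toCochain m f)
            (pcomp (⇑α) p (toCochain n g) (toCochain p h) j) i a :=
  congrFun (pcomp_pcomp_of_le α _ _ _ hp hj1 hj2)

/-- For `f ∈ C^m_α(A,A)`, `g ∈ C^n_α(A,A)`, `h ∈ C^p_α(A,A)` and
`1 ≤ i ≤ m`, `1 ≤ j ≤ n`, the `α`-twisted partial compositions satisfy the vertical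
(sequential) associativity relation `(f ∘ᵢ g) ∘_{i+j-1} h = f ∘ᵢ (g ∘ⱼ h)`. -/
theorem pcomp_vertical_associativity {K A : Type*} [Field K] [AddCommGroup A] [Module K A]
    (α : A →ₗ[K] A) (m n p i j : ℕ) (hp : 1 ≤ p)
    (hi1 : 1 ≤ i) (hi2 : i ≤ m) (hj1 : 1 ≤ j) (hj2 : j ≤ n)
    (f : MultilinearMap K (fun _ : Fin m => A) A)
    (g : MultilinearMap K (fun _ : Fin n => A) A)
    (h : MultilinearMap K (fun _ : Fin p => A) A)
    (hf : ∀ a : Fin m → A, α (f a) = f fun t => α (a t))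
    (hg : ∀ a : Fin n → A, α (g a) = g fun t => α (a t))
    (hh : ∀ a : Fin p → A, α (h a) = h fun t => α (a t)) :
    ∀ a : ℕ → A,
      pcomp (⇑α) p (pcomp (⇑α) n (toCochain m f) (toCochain n g) i) (toCochain p h)
          (i + j - 1) a
        = pcomp (⇑α) (n + p - 1) (toCochain m f)
            (pcomp (⇑α) p (toCochain n g) (toCochain p h) j) i a :=
  pcomp_vertical_associativity_general α m n p i j hp hj1 hj2 f g h
end

section
/- Let A be a vector space over a field K and α : A → A a linear map. For f ∈ C^m_α(A,A), g ∈ C^n_α(A,A), h ∈ C^p_α(A,A) and indices 1 ≤ i < j ≤ m, the α-twisted partial compositions satisfy the horizontal (parallel) commutativity relation (f ∘_i g) ∘_{j+n-1} h = (f ∘_j h) ∘_i g. -/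
/-! Both sides apply `f` to the same tuple: the two insertions act on disjoint blocks of
arguments, and the twist `α^[n-1]` (resp. `α^[p-1]`) applied to the block fed into `h`
(resp. `g`) can be pulled inside `h` (resp. `g`) because these cochains commute with `α`. -/

section PartialComposition

variable {A : Type*} (α : A → A)

def pcompArgs (n : ℕ) (g : (ℕ → A) → A) (i : ℕ) (a : ℕ → A) : ℕ → A :=
  fun t =>
    if t + 1 < i then α^[n - 1] (a t)
    else if t + 1 = i then g fun k => a (i - 1 + k)
    else α^[n - 1] (a (t + n - 1))

theorem pcomp_apply (n : ℕ) (f g : (ℕ → A) → A) (i : ℕ) (a : ℕ → A) :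
    pcomp α n f g i a = f (pcompArgs α n g i a) :=
  rfl

variable {α}

theorem iterate_apply_eq_of_commute {ι : Type*} {G : (ι → A) → A}
    (hG : ∀ a, α (G a) = G (α ∘ a)) (k : ℕ) (a : ι → A) :
    α^[k] (G a) = G (α^[k] ∘ a) := by
  induction k generalizing a with
  | zero => rfl
  | succ k ih =>
    rw [Function.iterate_succ_apply', ih, hG, Function.iterate_succ', Function.comp_assoc]

theorem pcompArgs_pcompArgs_of_lt {n p i j : ℕ} {G H : (ℕ → A) → A}
    (hG : ∀ a, α (G a) = G (α ∘ a)) (hH : ∀ a, α (H a) = H (α ∘ a))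
    (hGn : DependsOn G (Set.Iio n)) (hi : 1 ≤ i) (hij : i < j) (a : ℕ → A) :
    pcompArgs α n G i (pcompArgs α p H (j + n - 1) a)
      = pcompArgs α p H j (pcompArgs α n G i a) := by
  have iterate_comm (u v : ℕ) (x : A) : α^[u] (α^[v] x) = α^[v] (α^[u] x) := by
    rw [← Function.iterate_add_apply, ← Function.iterate_add_apply, Nat.add_comm]
  funext t
  simp only [pcompArgs]
  split_ifs <;> try omega
  · exact iterate_comm _ _ _
  · rw [iterate_apply_eq_of_commute hG]
    refine hGn fun k hk => ?_
    simp only [Function.comp_apply, Set.mem_Iio] at hk ⊢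
    rw [if_pos (by omega)]
  · exact iterate_comm _ _ _
  · rw [iterate_apply_eq_of_commute hH]
    congr 1
    funext k
    rw [Function.comp_apply, if_neg (by omega), if_neg (by omega),
      show j - 1 + k + n - 1 = j + n - 1 - 1 + k by omega]
  · rw [iterate_comm, show t + p - 1 + n - 1 = t + n - 1 + p - 1 by omega]

theorem pcomp_pcomp_of_lt {n p i j : ℕ} (F : (ℕ → A) → A) {G H : (ℕ → A) → A}
    (hG : ∀ a, α (G a) = G (α ∘ a)) (hH : ∀ a, α (H a) = H (α ∘ a))
    (hGn : DependsOn G (Set.Iio n)) (hi : 1 ≤ i) (hij : i < j) :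
    pcomp α p (pcomp α n F G i) H (j + n - 1) = pcomp α n (pcomp α p F H j) G i :=
  funext fun a => by
    simp only [pcomp_apply]
    exact congrArg F (pcompArgs_pcompArgs_of_lt hG hH hGn hi hij a)

end PartialComposition

section Cochain

variable {K A : Type*} [Field K] [AddCommGroup A] [Module K A] {n : ℕ}
  (g : MultilinearMap K (fun _ : Fin n => A) A)

theorem dependsOn_toCochain : DependsOn (toCochain n g) (Set.Iio n) :=
  fun _ _ hxy => congrArg g (funext fun t => hxy t t.isLt)

theorem toCochain_apply_comp {α : A → A} (hg : ∀ a : Fin n → A, α (g a) = g fun t => α (a t))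
    (a : ℕ → A) : α (toCochain n g a) = toCochain n g (α ∘ a) :=
  hg _

end Cochain

theorem pcomp_horizontal_commutativity_general {K A : Type*} [Field K] [AddCommGroup A] [Module K A]
    (α : A →ₗ[K] A) (m n p i j : ℕ)
    (hi1 : 1 ≤ i) (hij : i < j)
    (f : MultilinearMap K (fun _ : Fin m => A) A)
    (g : MultilinearMap K (fun _ : Fin n => A) A)
    (h : MultilinearMap K (fun _ : Fin p => A) A)
    (hg : ∀ a : Fin n → A, α (g a) = g fun t => α (a t))
    (hh : ∀ a : Fin p → A, α (h a) = h fun t => α (a t)) :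
    ∀ a : ℕ → A,
      pcomp (⇑α) p (pcomp (⇑α) n (toCochain m f) (toCochain n g) i) (toCochain p h)
          (j + n - 1) a
        = pcomp (⇑α) n (pcomp (⇑α) p (toCochain m f) (toCochain p h) j)
            (toCochain n g) i a :=
  congrFun <| pcomp_pcomp_of_lt _ (toCochain_apply_comp g hg) (toCochain_apply_comp h hh)
    (dependsOn_toCochain g) hi1 hij

/-- For `f ∈ C^m_α(A,A)`, `g ∈ C^n_α(A,A)`, `h ∈ C^p_α(A,A)` and
`1 ≤ i < j ≤ m`, the `α`-twisted partial compositions satisfy the horizontal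
(parallel) commutativity relation `(f ∘ᵢ g) ∘_{j+n-1} h = (f ∘ⱼ h) ∘ᵢ g`. -/
theorem pcomp_horizontal_commutativity {K A : Type*} [Field K] [AddCommGroup A] [Module K A]
    (α : A →ₗ[K] A) (m n p i j : ℕ) (hn : 1 ≤ n) (hp : 1 ≤ p)
    (hi1 : 1 ≤ i) (hij : i < j) (hj2 : j ≤ m)
    (f : MultilinearMap K (fun _ : Fin m => A) A)
    (g : MultilinearMap K (fun _ : Fin n => A) A)
    (h : MultilinearMap K (fun _ : Fin p => A) A)
    (hf : ∀ a : Fin m → A, α (f a) = f fun t => α (a t))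
    (hg : ∀ a : Fin n → A, α (g a) = g fun t => α (a t))
    (hh : ∀ a : Fin p → A, α (h a) = h fun t => α (a t)) :
    ∀ a : ℕ → A,
      pcomp (⇑α) p (pcomp (⇑α) n (toCochain m f) (toCochain n g) i) (toCochain p h)
          (j + n - 1) a
        = pcomp (⇑α) n (pcomp (⇑α) p (toCochain m f) (toCochain p h) j)
            (toCochain n g) i a :=
  pcomp_horizontal_commutativity_general α m n p i j hi1 hij f g h hg hh
end

section
/- Let (A, μ, α) be a hom-associative algebra. For every f ∈ C^n_α(A,A), the Hochschild-type coboundary δ_α f again satisfies the α-compatibility condition, i.e. δ_α f ∈ C^{n+1}_α(A,A). -/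
/-!
Each of the `n + 2` terms of `δ_α f` is a multilinear map in its own right: the outer two are
curryings of `f` against `μ`, and the inner ones are `f` precomposed with the contraction of two
adjacent slots by `μ`, which is linear in each slot separately. Each term commutes with `α`
because `α` is multiplicative, commutes with its own powers, and commutes with `f`.
-/

open Function

section Cochains

variable {R A : Type*} [CommSemiring R] [AddCommGroup A] [Module R A] {n : ℕ}

def mulLeftCochain (L : A →ₗ[R] A →ₗ[R] A) (f : MultilinearMap R (fun _ : Fin n => A) A) :
    MultilinearMap R (fun _ : Fin (n + 1) => A) A :=
  LinearMap.uncurryLeft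
    { toFun := fun x => (L x).compMultilinearMap f
      map_add' := fun x y => by rw [map_add, LinearMap.add_compMultilinearMap]
      map_smul' := fun c x => by ext; simp }

@[simp]
theorem mulLeftCochain_apply (L : A →ₗ[R] A →ₗ[R] A)
    (f : MultilinearMap R (fun _ : Fin n => A) A) (a : Fin (n + 1) → A) :
    mulLeftCochain L f a = L (a 0) (f (Fin.tail a)) :=
  rfl

def mulRightCochain (L : A →ₗ[R] A →ₗ[R] A) (f : MultilinearMap R (fun _ : Fin n => A) A) :
    MultilinearMap R (fun _ : Fin (n + 1) => A) A :=
  (L.compMultilinearMap f).uncurryRight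

@[simp]
theorem mulRightCochain_apply (L : A →ₗ[R] A →ₗ[R] A)
    (f : MultilinearMap R (fun _ : Fin n => A) A) (a : Fin (n + 1) → A) :
    mulRightCochain L f a = L (f (Fin.init a)) (a (Fin.last n)) :=
  rfl

variable (μ : A →ₗ[R] A →ₗ[R] A) (α : A →ₗ[R] A)

/-- `(α a₀, …, α a_{i-1}, μ a_i a_{i+1}, α a_{i+2}, …, α a_n)`: removing `a_{i+1}` leaves
`a_i` in slot `i`, which is then overwritten. -/
def contractTuple (i : Fin n) (a : Fin (n + 1) → A) : Fin n → A :=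
  update (fun j => α (i.succ.removeNth a j)) i (μ (a i.castSucc) (a i.succ))

theorem exists_contractTuple_update (i : Fin n) (a : Fin (n + 1) → A) (k : Fin (n + 1)) :
    ∃ (s : Fin n) (L : A →ₗ[R] A), ∀ v,
      contractTuple μ α i (update a k v) = update (contractTuple μ α i a) s (L v) := by
  by_cases hk : k = i.succ
  · subst hk
    refine ⟨i, μ (a i.castSucc), fun v => ?_⟩
    simp [contractTuple, (Fin.castSucc_lt_succ (i := i)).ne]
  obtain ⟨s, rfl⟩ := Fin.exists_succAbove_eq hk
  by_cases hs : s = i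
  · subst hs
    refine ⟨s, μ.flip (a s.succ), fun v => ?_⟩
    ext j
    rcases eq_or_ne j s with rfl | hj
    · simp [contractTuple, (Fin.castSucc_lt_succ (i := j)).ne']
    · simp only [contractTuple, update_of_ne hj, Fin.removeNth_apply, ← Fin.succAbove_succ_self,
        update_of_ne (Fin.succAbove_right_injective.ne hj)]
  · refine ⟨s, α, fun v => ?_⟩
    have hcast : i.castSucc ≠ i.succ.succAbove s := by
      rw [← Fin.succAbove_succ_self]; exact Fin.succAbove_right_injective.ne (Ne.symm hs)
    rw [contractTuple, contractTuple, Fin.removeNth_update_succAbove, update_of_ne hcast,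
      update_of_ne (Fin.succAbove_ne _ _).symm, update_comm (Ne.symm hs)]
    congr 1
    exact comp_update α _ s v

def contractCochain (i : Fin n) (f : MultilinearMap R (fun _ : Fin n => A) A) :
    MultilinearMap R (fun _ : Fin (n + 1) => A) A :=
  MultilinearMap.mk' (fun a => f (contractTuple μ α i a))
    (fun a k x y => by
      obtain ⟨s, L, hL⟩ := exists_contractTuple_update μ α i a k
      simp only [hL, map_add, f.map_update_add])
    (fun a k c x => by
      obtain ⟨s, L, hL⟩ := exists_contractTuple_update μ α i a k
      simp only [hL, map_smul, f.map_update_smul])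

@[simp]
theorem contractCochain_apply (i : Fin n) (f : MultilinearMap R (fun _ : Fin n => A) A)
    (a : Fin (n + 1) → A) : contractCochain μ α i f a = f (contractTuple μ α i a) :=
  rfl

def twistedCoboundary (f : MultilinearMap R (fun _ : Fin n => A) A) :
    MultilinearMap R (fun _ : Fin (n + 1) => A) A :=
  mulLeftCochain (μ ∘ₗ α ^ (n - 1)) f
    + ∑ i : Fin n, (-1 : ℤ) ^ ((i : ℕ) + 1) • contractCochain μ α i f
    + (-1 : ℤ) ^ (n + 1) • mulRightCochain (μ.compl₂ (α ^ (n - 1))) f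

theorem contractTuple_apply_val (i : Fin n) (b : ℕ → A) :
    contractTuple μ α i (fun j => b j) = fun j : Fin n =>
      if (j : ℕ) < i then α (b j) else if (j : ℕ) = i then μ (b i) (b (i + 1))
      else α (b (j + 1)) := by
  ext j
  simp only [contractTuple, update_apply, Fin.removeNth_apply, Fin.ext_iff, Fin.succAbove,
    Fin.lt_def]
  split_ifs <;> simp_all <;> omega

theorem twistedCoboundary_apply_val (f : MultilinearMap R (fun _ : Fin n => A) A) (b : ℕ → A) :
    twistedCoboundary μ α f (fun j => b j) =
      hdelta (fun x y => μ x y) α n (fun b => f fun j => b j) b := by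
  simp [twistedCoboundary, hdelta, contractTuple_apply_val, Finset.sum_range, Fin.tail_def,
    Fin.init_def, Module.End.pow_apply]

end Cochains

theorem map_hdelta {A F : Type*} [AddCommGroup A] [FunLike F A A] [AddMonoidHomClass F A A]
    (μ : A → A → A) (α : F) (hαμ : ∀ a b, α (μ a b) = μ (α a) (α b)) (n : ℕ)
    (g : (ℕ → A) → A) (hg : ∀ b, α (g b) = g fun j => α (b j)) (b : ℕ → A) :
    α (hdelta μ α n g b) = hdelta μ α n g fun j => α (b j) := by
  have hiter : ∀ x, α (α^[n - 1] x) = α^[n - 1] (α x) := fun x =>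
    (Commute.iterate_self (⇑α) (n - 1) x).symm
  unfold hdelta
  simp only [map_add, map_sum, map_zsmul, hαμ, hg, hiter, apply_ite (⇑α)]

theorem map_comm_of_toCochain_comm {K A : Type*} [Field K] [AddCommGroup A] [Module K A] {m : ℕ}
    (F : MultilinearMap K (fun _ : Fin m => A) A) (α : A → A)
    (hF : ∀ b, α (toCochain m F b) = toCochain m F fun j => α (b j)) (a : Fin m → A) :
    α (F a) = F fun j => α (a j) := by
  obtain ⟨b, hb⟩ : ∃ b : ℕ → A, ∀ j : Fin m, b j = a j :=
    ⟨fun k => if h : k < m then a ⟨k, h⟩ else 0, fun j => dif_pos j.isLt⟩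
  simpa only [toCochain, hb] using hF b

theorem hdelta_mem_twisted_cochain_general {K A : Type*} [Field K] [AddCommGroup A] [Module K A]
    (μ : A →ₗ[K] A →ₗ[K] A) (α : A →ₗ[K] A)
    (hαμ : ∀ a b : A, α (μ a b) = μ (α a) (α b))
    (n : ℕ)
    (f : MultilinearMap K (fun _ : Fin n => A) A)
    (hf : ∀ a : Fin n → A, α (f a) = f fun j => α (a j)) :
    ∃ F : MultilinearMap K (fun _ : Fin (n + 1) => A) A,
      (∀ a : Fin (n + 1) → A, α (F a) = F fun j => α (a j)) ∧
      toCochain (n + 1) F = hdelta (fun x y => μ x y) (⇑α) n (toCochain n f) := by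
  have hδ : toCochain (n + 1) (twistedCoboundary μ α f) =
      hdelta (fun x y => μ x y) (⇑α) n (toCochain n f) :=
    funext (twistedCoboundary_apply_val μ α f)
  refine ⟨twistedCoboundary μ α f, map_comm_of_toCochain_comm _ α fun b => ?_, hδ⟩
  rw [hδ]
  exact map_hdelta _ α hαμ n _ (fun b => hf _) b

/-- Let `(A, μ, α)` be a hom-associative algebra. For every
`f ∈ C^n_α(A,A)`, the Hochschild-type coboundary `δ_α f` again satisfies the
`α`-compatibility condition, i.e. `δ_α f ∈ C^{n+1}_α(A,A)`. -/
theorem hdelta_mem_twisted_cochain {K A : Type*} [Field K] [AddCommGroup A] [Module K A]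
    (μ : A →ₗ[K] A →ₗ[K] A) (α : A →ₗ[K] A)
    (hαμ : ∀ a b : A, α (μ a b) = μ (α a) (α b))
    (hassoc : ∀ a b c : A, μ (α a) (μ b c) = μ (μ a b) (α c))
    (n : ℕ) (hn : 1 ≤ n)
    (f : MultilinearMap K (fun _ : Fin n => A) A)
    (hf : ∀ a : Fin n → A, α (f a) = f fun j => α (a j)) :
    ∃ F : MultilinearMap K (fun _ : Fin (n + 1) => A) A,
      (∀ a : Fin (n + 1) → A, α (F a) = F fun j => α (a j)) ∧
      toCochain (n + 1) F = hdelta (fun x y => μ x y) (⇑α) n (toCochain n f) :=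
  hdelta_mem_twisted_cochain_general μ α hαμ n f hf
end

section
/- Let (A, μ, α) be a hom-associative algebra. The Hochschild-type coboundary operator δ_α on the cochain groups C^•_α(A,A) squares to zero: δ_α ∘ δ_α = 0. -/
namespace HomHochschild

section Face

variable {A : Type*} (μ : A → A → A) (α : A → A)

def face (i : ℕ) (a : ℕ → A) : ℕ → A :=
  fun j => if j < i then α (a j) else if j = i then μ (a i) (a (i + 1)) else α (a (j + 1))

variable {μ α}

theorem face_of_lt {i j : ℕ} (h : j < i) (a : ℕ → A) : face μ α i a j = α (a j) := if_pos h

theorem face_self (i : ℕ) (a : ℕ → A) : face μ α i a i = μ (a i) (a (i + 1)) := by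
  simp [face]

theorem face_of_gt {i j : ℕ} (h : i < j) (a : ℕ → A) : face μ α i a j = α (a (j + 1)) := by
  simp [face, Nat.lt_asymm h, Nat.ne_of_gt h]

theorem face_succ_tail (i : ℕ) (a : ℕ → A) :
    (fun j => face μ α (i + 1) a (j + 1)) = face μ α i (fun j => a (j + 1)) := by
  funext j
  rcases lt_trichotomy j i with hj | rfl | hj
  · rw [face_of_lt (by omega), face_of_lt hj]
  · rw [face_self, face_self]
  · rw [face_of_gt (by omega), face_of_gt hj]

theorem face_face (hαμ : Function.Semiconj₂ α μ μ)
    (hassoc : ∀ a b c, μ (α a) (μ b c) = μ (μ a b) (α c)) {i k : ℕ} (h : i ≤ k) (a : ℕ → A) :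
    face μ α k (face μ α i a) = face μ α i (face μ α (k + 1) a) := by
  funext j
  rcases lt_trichotomy j i with hj | rfl | hj
  · rw [face_of_lt (by omega), face_of_lt hj, face_of_lt hj, face_of_lt (by omega)]
  · rcases h.eq_or_lt with rfl | hjk
    · rw [face_self, face_self, face_self, face_of_gt (by omega), face_of_lt (by omega),
        face_self, hassoc]
    · rw [face_of_lt hjk, face_self, face_self, face_of_lt (by omega), face_of_lt (by omega),
        hαμ.eq]
  · rcases lt_trichotomy j k with hjk | rfl | hjk
    · rw [face_of_lt hjk, face_of_gt hj, face_of_gt hj, face_of_lt (by omega)]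
    · rw [face_self, face_of_gt hj, face_of_gt (by omega), face_of_gt hj, face_self, hαμ.eq]
    · rw [face_of_gt (by omega), face_of_gt (by omega), face_of_gt hj, face_of_gt (by omega)]

end Face

section FaceSum

variable {A M : Type*} [AddCommGroup M] (μ : A → A → A) (α : A → A)

def faceSum (N : ℕ) (g : (ℕ → A) → M) : (ℕ → A) → M :=
  fun a => ∑ i ∈ Finset.range N, ((-1 : ℤ) ^ (i + 1)) • g (face μ α i a)

variable {μ α}

theorem faceSum_add (N : ℕ) (g₁ g₂ : (ℕ → A) → M) :
    faceSum μ α N (g₁ + g₂) = faceSum μ α N g₁ + faceSum μ α N g₂ := by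
  funext a
  simp only [faceSum, Pi.add_apply, smul_add, Finset.sum_add_distrib]

theorem faceSum_faceSum (hαμ : Function.Semiconj₂ α μ μ)
    (hassoc : ∀ a b c, μ (α a) (μ b c) = μ (μ a b) (α c)) (n : ℕ) (g : (ℕ → A) → M)
    (a : ℕ → A) : faceSum μ α (n + 1) (faceSum μ α n g) a = 0 := by
  have pair {i k : ℕ} (h : i ≤ k) :
      ((-1 : ℤ) ^ (i + 1) * (-1) ^ (k + 1)) • g (face μ α k (face μ α i a))
        + ((-1 : ℤ) ^ (k + 1 + 1) * (-1) ^ (i + 1)) • g (face μ α i (face μ α (k + 1) a)) = 0 := by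
    rw [face_face hαμ hassoc h, ← add_smul, pow_succ (-1 : ℤ) (k + 1)]
    simp [mul_comm]
  simp only [faceSum, Finset.smul_sum, smul_smul]
  rw [← Finset.sum_product']
  -- the term `(i, k)` with `i ≤ k` cancels the term `(k + 1, i)`
  refine Finset.sum_involution
    (fun p _ => if p.2 < p.1 then (p.2, p.1 - 1) else (p.2 + 1, p.1)) ?_ ?_ ?_ ?_
  · rintro ⟨x, y⟩ -
    dsimp only
    split_ifs with h
    · obtain ⟨k, rfl⟩ : ∃ k, x = k + 1 := ⟨x - 1, by omega⟩
      rw [add_comm]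
      exact pair (by omega)
    · exact pair (by omega)
  · rintro ⟨x, y⟩ - -
    dsimp only
    split_ifs <;> simp only [ne_eq, Prod.mk.injEq] <;> omega
  · rintro ⟨x, y⟩ hp
    simp only [Finset.mem_product, Finset.mem_range] at hp ⊢
    split_ifs <;> omega
  · rintro ⟨x, y⟩ -
    rcases lt_or_ge y x with h | h
    · simp [h, show ¬x - 1 < y by omega]
      omega
    · simp [show ¬y < x by omega, show x < y + 1 by omega]

end FaceSum

section Coboundary

variable {A : Type*} [AddCommGroup A] (μ : A →+ A →+ A) (α : A → A)

def leftAct (N : ℕ) (g : (ℕ → A) → A) : (ℕ → A) → A :=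
  fun a => μ (α^[N - 1] (a 0)) (g fun j => a (j + 1))

def rightAct (N : ℕ) (g : (ℕ → A) → A) : (ℕ → A) → A :=
  fun a => ((-1 : ℤ) ^ (N + 1)) • μ (g a) (α^[N - 1] (a N))

theorem hdelta_eq (N : ℕ) (g : (ℕ → A) → A) :
    hdelta (μ · ·) α N g = leftAct μ α N g + faceSum (μ · ·) α N g + rightAct μ α N g :=
  rfl

variable {μ α}

theorem leftAct_add (N : ℕ) (g₁ g₂ : (ℕ → A) → A) :
    leftAct μ α N (g₁ + g₂) = leftAct μ α N g₁ + leftAct μ α N g₂ :=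
  funext fun _ => map_add (μ _) _ _

theorem rightAct_add (N : ℕ) (g₁ g₂ : (ℕ → A) → A) :
    rightAct μ α N (g₁ + g₂) = rightAct μ α N g₁ + rightAct μ α N g₂ := by
  funext a
  simp only [rightAct, Pi.add_apply, map_add, AddMonoidHom.add_apply, smul_add]

variable {n : ℕ} {F : (ℕ → A) → A}

theorem faceSum_leftAct (hαμ : Function.Semiconj₂ α (μ · ·) (μ · ·))
    (hassoc : ∀ a b c, μ (α a) (μ b c) = μ (μ a b) (α c))
    (hF : ∀ b, α (F b) = F fun j => α (b j)) (a : ℕ → A) :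
    faceSum (μ · ·) α (n + 2) (leftAct μ α (n + 1) F) a =
      -(leftAct μ α (n + 2) (leftAct μ α (n + 1) F) a
        + leftAct μ α (n + 2) (faceSum (μ · ·) α (n + 1) F) a) := by
  have hLL : μ (α^[n] (face (μ · ·) α 0 a 0)) (F fun j => face (μ · ·) α 0 a (j + 1))
      = μ (α^[n + 1] (a 0)) (μ (α^[n] (a 1)) (F fun j => a (j + 2))) := by
    have h0 : (fun j => face (μ · ·) α 0 a (j + 1)) = fun j => α (a (j + 2)) :=
      funext fun j => face_of_gt j.succ_pos a
    rw [h0, face_self, ← hF, (hαμ.iterate n).eq, ← hassoc, Function.iterate_succ_apply']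
  have hLS (x : ℕ) :
      μ (α^[n] (face (μ · ·) α (x + 1) a 0)) (F fun j => face (μ · ·) α (x + 1) a (j + 1))
        = μ (α^[n + 1] (a 0)) (F (face (μ · ·) α x fun j => a (j + 1))) := by
    rw [face_of_lt x.succ_pos, face_succ_tail, Function.iterate_succ_apply]
  simp only [faceSum, leftAct, Nat.add_sub_cancel, Nat.add_succ_sub_one]
  rw [Finset.sum_range_succ']
  simp [hLL, hLS, pow_succ, map_sum, map_zsmul]

theorem faceSum_rightAct (hαμ : Function.Semiconj₂ α (μ · ·) (μ · ·))
    (hassoc : ∀ a b c, μ (α a) (μ b c) = μ (μ a b) (α c))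
    (hF : ∀ b, α (F b) = F fun j => α (b j))
    (hFn : ∀ b c : ℕ → A, (∀ j < n + 1, b j = c j) → F b = F c) (a : ℕ → A) :
    faceSum (μ · ·) α (n + 2) (rightAct μ α (n + 1) F) a =
      -(rightAct μ α (n + 2) (faceSum (μ · ·) α (n + 1) F) a
        + rightAct μ α (n + 2) (rightAct μ α (n + 1) F) a) := by
  have hRS {x : ℕ} (hx : x ∈ Finset.range (n + 1)) :
      μ (F (face (μ · ·) α x a)) (α^[n] (face (μ · ·) α x a (n + 1)))
        = μ (F (face (μ · ·) α x a)) (α^[n + 1] (a (n + 2))) := by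
    rw [face_of_gt (Finset.mem_range.mp hx), Function.iterate_succ_apply]
  have hRR : μ (F (face (μ · ·) α (n + 1) a)) (α^[n] (face (μ · ·) α (n + 1) a (n + 1)))
      = μ (μ (F a) (α^[n] (a (n + 1)))) (α^[n + 1] (a (n + 2))) := by
    have hlast : F (face (μ · ·) α (n + 1) a) = α (F a) :=
      (hFn _ _ fun j hj => face_of_lt hj a).trans (hF a).symm
    rw [hlast, face_self, (hαμ.iterate n).eq, hassoc, Function.iterate_succ_apply']
  simp only [faceSum, rightAct, Nat.add_sub_cancel, Nat.add_succ_sub_one]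
  rw [Finset.sum_range_succ, Finset.sum_congr rfl fun x hx => by rw [hRS hx], hRR]
  simp [pow_succ, map_sum, map_zsmul, Finset.smul_sum, smul_smul, mul_comm]
  abel

theorem leftAct_rightAct_add_rightAct_leftAct
    (hassoc : ∀ a b c, μ (α a) (μ b c) = μ (μ a b) (α c)) (a : ℕ → A) :
    leftAct μ α (n + 2) (rightAct μ α (n + 1) F) a
      + rightAct μ α (n + 2) (leftAct μ α (n + 1) F) a = 0 := by
  have h : μ (α^[n + 1] (a 0)) (μ (F fun j => a (j + 1)) (α^[n] (a (n + 2))))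
      = μ (μ (α^[n] (a 0)) (F fun j => a (j + 1))) (α^[n + 1] (a (n + 2))) := by
    rw [Function.iterate_succ_apply', hassoc, Function.iterate_succ_apply']
  simp only [leftAct, rightAct, Nat.add_sub_cancel, Nat.add_succ_sub_one, map_zsmul, h]
  simp [pow_succ]

theorem hdelta_hdelta_apply_eq_zero (hαμ : Function.Semiconj₂ α (μ · ·) (μ · ·))
    (hassoc : ∀ a b c, μ (α a) (μ b c) = μ (μ a b) (α c))
    (hF : ∀ b, α (F b) = F fun j => α (b j))
    (hFn : ∀ b c : ℕ → A, (∀ j < n + 1, b j = c j) → F b = F c) (a : ℕ → A) :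
    hdelta (μ · ·) α (n + 2) (hdelta (μ · ·) α (n + 1) F) a = 0 := by
  rw [hdelta_eq, hdelta_eq]
  simp only [Pi.add_apply, leftAct_add, rightAct_add, faceSum_add]
  rw [← leftAct_rightAct_add_rightAct_leftAct hassoc a, faceSum_faceSum hαμ hassoc,
    faceSum_leftAct hαμ hassoc hF, faceSum_rightAct hαμ hassoc hF hFn]
  abel

end Coboundary

end HomHochschild

/-- Let `(A, μ, α)` be a hom-associative algebra. The Hochschild-type
coboundary operator `δ_α` on the cochain groups `C^•_α(A,A)` squares to zero. -/
theorem hdelta_hdelta_eq_zero {K A : Type*} [Field K] [AddCommGroup A] [Module K A]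
    (μ : A →ₗ[K] A →ₗ[K] A) (α : A →ₗ[K] A)
    (hαμ : ∀ a b : A, α (μ a b) = μ (α a) (α b))
    (hassoc : ∀ a b c : A, μ (α a) (μ b c) = μ (μ a b) (α c))
    (n : ℕ) (hn : 1 ≤ n)
    (f : MultilinearMap K (fun _ : Fin n => A) A)
    (hf : ∀ a : Fin n → A, α (f a) = f fun j => α (a j)) :
    ∀ a : ℕ → A,
      hdelta (fun x y => μ x y) (⇑α) (n + 1)
        (hdelta (fun x y => μ x y) (⇑α) n (toCochain n f)) a = 0 := by
  obtain ⟨n, rfl⟩ := Nat.exists_eq_add_of_le' hn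
  exact HomHochschild.hdelta_hdelta_apply_eq_zero
    (μ := LinearMap.toAddMonoidHom'.comp μ.toAddMonoidHom) hαμ hassoc (fun b => hf _)
    fun b c hbc => congrArg f (funext fun j => hbc j j.isLt)
end

section
/- Let (A, μ, α) be a hom-associative algebra. The α-twisted cup product on C^•_α(A,A) is associative on cochains: for f ∈ C^m_α(A,A), g ∈ C^n_α(A,A), h ∈ C^p_α(A,A), one has (f ∪_α g) ∪_α h = f ∪_α (g ∪_α h). -/
/-!
Both sides evaluate to `μ` applied to values of `f`, `g`, `h` at `α`-twisted arguments.
The exponents of `α` agree except that the left side has one extra `α` on the `h`-argument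
and the right side one extra `α` on the `f`-argument. Pulling these out by `α`-equivariance
of `f` and `h` leaves `μ (μ x y) (α z) = μ (α x) (μ y z)`, which is hom-associativity.
-/

theorem iterate_succ_apply_of_equivariant {A : Type*} {α : A → A} {F : (ℕ → A) → A}
    (hF : ∀ a, α (F a) = F fun j => α (a j)) (k : ℕ) (a : ℕ → A) :
    F (fun j => α^[k + 1] (a j)) = α (F fun j => α^[k] (a j)) := by
  simp only [hF, Function.iterate_succ_apply']

theorem cup_assoc_apply_of_equivariant {A : Type*} {μ : A → A → A} {α : A → A}
    (hassoc : ∀ a b c, μ (α a) (μ b c) = μ (μ a b) (α c))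
    {m n p : ℕ} (hm : 1 ≤ m) (hn : 1 ≤ n) (hp : 1 ≤ p) {F G H : (ℕ → A) → A}
    (hF : ∀ a, α (F a) = F fun j => α (a j)) (hH : ∀ a, α (H a) = H fun j => α (a j))
    (a : ℕ → A) :
    cup μ α (m + n) p (cup μ α m n F G) H a = cup μ α m (n + p) F (cup μ α n p G H) a := by
  calc cup μ α (m + n) p (cup μ α m n F G) H a
      = μ (μ (F fun j => α^[n - 1 + (p - 1)] (a j))
            (G fun j => α^[m - 1 + (p - 1)] (a (m + j))))
          (α (H fun j => α^[n - 1 + (m - 1)] (a (m + n + j)))) := by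
        rw [← iterate_succ_apply_of_equivariant hH, show n - 1 + (m - 1) + 1 = m + n - 1 by omega]
        simp only [cup, ← Function.iterate_add_apply]
    _ = μ (α (F fun j => α^[n - 1 + (p - 1)] (a j)))
          (μ (G fun j => α^[m - 1 + (p - 1)] (a (m + j)))
            (H fun j => α^[n - 1 + (m - 1)] (a (m + n + j)))) := (hassoc _ _ _).symm
    _ = cup μ α m (n + p) F (cup μ α n p G H) a := by
        rw [← iterate_succ_apply_of_equivariant hF, show n - 1 + (p - 1) + 1 = n + p - 1 by omega]
        simp only [cup, ← Function.iterate_add_apply, Nat.add_assoc, Nat.add_comm (p - 1) (m - 1)]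

theorem cup_assoc_general {K A : Type*} [Field K] [AddCommGroup A] [Module K A]
    (μ : A →ₗ[K] A →ₗ[K] A) (α : A →ₗ[K] A)
    (hassoc : ∀ a b c : A, μ (α a) (μ b c) = μ (μ a b) (α c))
    (m n p : ℕ) (hm : 1 ≤ m) (hn : 1 ≤ n) (hp : 1 ≤ p)
    (f : MultilinearMap K (fun _ : Fin m => A) A)
    (g : MultilinearMap K (fun _ : Fin n => A) A)
    (h : MultilinearMap K (fun _ : Fin p => A) A)
    (hf : ∀ a : Fin m → A, α (f a) = f fun t => α (a t))
    (hh : ∀ a : Fin p → A, α (h a) = h fun t => α (a t)) :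
    ∀ a : ℕ → A,
      cup (fun x y => μ x y) (⇑α) (m + n) p
          (cup (fun x y => μ x y) (⇑α) m n (toCochain m f) (toCochain n g)) (toCochain p h) a
        = cup (fun x y => μ x y) (⇑α) m (n + p) (toCochain m f)
            (cup (fun x y => μ x y) (⇑α) n p (toCochain n g) (toCochain p h)) a :=
  fun _ => cup_assoc_apply_of_equivariant hassoc hm hn hp (fun _ => hf _) (fun _ => hh _) _

/-- Let `(A, μ, α)` be a hom-associative algebra. The `α`-twisted cup
product on `C^•_α(A,A)` is associative on cochains:
`(f ∪_α g) ∪_α h = f ∪_α (g ∪_α h)`. -/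
theorem cup_assoc {K A : Type*} [Field K] [AddCommGroup A] [Module K A]
    (μ : A →ₗ[K] A →ₗ[K] A) (α : A →ₗ[K] A)
    (hαμ : ∀ a b : A, α (μ a b) = μ (α a) (α b))
    (hassoc : ∀ a b c : A, μ (α a) (μ b c) = μ (μ a b) (α c))
    (m n p : ℕ) (hm : 1 ≤ m) (hn : 1 ≤ n) (hp : 1 ≤ p)
    (f : MultilinearMap K (fun _ : Fin m => A) A)
    (g : MultilinearMap K (fun _ : Fin n => A) A)
    (h : MultilinearMap K (fun _ : Fin p => A) A)
    (hf : ∀ a : Fin m → A, α (f a) = f fun t => α (a t))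
    (hg : ∀ a : Fin n → A, α (g a) = g fun t => α (a t))
    (hh : ∀ a : Fin p → A, α (h a) = h fun t => α (a t)) :
    ∀ a : ℕ → A,
      cup (fun x y => μ x y) (⇑α) (m + n) p
          (cup (fun x y => μ x y) (⇑α) m n (toCochain m f) (toCochain n g)) (toCochain p h) a
        = cup (fun x y => μ x y) (⇑α) m (n + p) (toCochain m f)
            (cup (fun x y => μ x y) (⇑α) n p (toCochain n g) (toCochain p h)) a :=
  cup_assoc_general μ α hassoc m n p hm hn hp f g h hf hh
end

section
/- Let (A, μ, α) be a hom-associative algebra. The Hochschild-type coboundary δ_α is a graded derivation of the α-twisted cup product: for f ∈ C^m_α(A,A) and g ∈ C^n_α(A,A), δ_α(f ∪_α g) = (δ_α f) ∪_α g + (−1)^m f ∪_α (δ_α g). -/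
/-!
Split `δ` into its two outer terms and the alternating sum over the faces `dᵢ = face μ α i`.
The faces satisfy `(F ∪ G) ∘ dᵢ = (F ∘ dᵢ) ∪ G` for `i < m` and `(F ∪ G) ∘ d_{m+i} = F ∪ (G ∘ dᵢ)`,
so the inner sum of `δ(F ∪ G)` is the inner sum of `δF ∪ G` plus `(-1)^m` times that of `F ∪ δG`.
Hom-associativity `μ(α x, μ(y, z)) = μ(μ(x, y), α z)` identifies the outer left term of `δ(F ∪ G)`
with that of `δF ∪ G` and its outer right term with that of `F ∪ δG`, and cancels the two terms
left over: the right term of `δF` against the left term of `δG`.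
-/

open Finset Function

section Faces

variable {A : Type*}

theorem iterate_sub_one_apply (α : A → A) {k : ℕ} (hk : 1 ≤ k) (x : A) :
    α^[k - 1] (α x) = α^[k] x := by
  rw [← iterate_succ_apply α, Nat.succ_eq_add_one, Nat.sub_add_cancel hk]

theorem apply_iterate_sub_one (α : A → A) {k : ℕ} (hk : 1 ≤ k) (x : A) :
    α (α^[k - 1] x) = α^[k] x := by
  rw [← iterate_succ_apply' α, Nat.succ_eq_add_one, Nat.sub_add_cancel hk]

def face (μ : A → A → A) (α : A → A) (i : ℕ) (a : ℕ → A) : ℕ → A := fun j =>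
  if j < i then α (a j) else if j = i then μ (a i) (a (i + 1)) else α (a (j + 1))

theorem face_of_lt {μ : A → A → A} {α : A → A} {i j : ℕ} (h : i < j) (a : ℕ → A) :
    face μ α i a j = α (a (j + 1)) := by
  simp [face, h.not_gt, h.ne']

theorem face_of_gt {μ : A → A → A} {α : A → A} {i j : ℕ} (h : j < i) (a : ℕ → A) :
    face μ α i a j = α (a j) := by
  simp [face, h]

theorem face_add_add (μ : A → A → A) (α : A → A) (m i j : ℕ) (a : ℕ → A) :
    face μ α (m + i) a (m + j) = face μ α i (fun k => a (m + k)) j := by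
  simp [face, ← add_assoc]

theorem face_iterate {μ : A → A → A} {α : A → A} (hαμ : Semiconj₂ α μ μ) (k i : ℕ)
    (a : ℕ → A) : face μ α i (fun j => α^[k] (a j)) = fun j => α^[k] (face μ α i a j) := by
  funext j
  simp only [face]
  split_ifs <;> simp only [(hαμ.iterate k).eq, ← iterate_succ_apply, iterate_succ_apply']

variable {μ : A → A → A} {α : A → A} {F G : (ℕ → A) → A} {m n : ℕ}

theorem cup_comp_face_of_lt (hαμ : Semiconj₂ α μ μ) (hm : 1 ≤ m) {i : ℕ} (hi : i < m) :
    (fun a => cup μ α m n F G (face μ α i a))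
      = cup μ α (m + 1) n (fun a => F (face μ α i a)) G := by
  funext a
  simp only [cup, Nat.add_sub_cancel, face_iterate hαμ]
  congr 2
  funext j
  rw [face_of_lt (by omega), iterate_sub_one_apply α hm, add_right_comm]

theorem cup_comp_face_add (hαμ : Semiconj₂ α μ μ)
    (hF : ∀ a b : ℕ → A, (∀ j < m, a j = b j) → F a = F b) (hn : 1 ≤ n) (i : ℕ) :
    (fun a => cup μ α m n F G (face μ α (m + i) a))
      = cup μ α m (n + 1) F (fun a => G (face μ α i a)) := by
  funext a
  simp only [cup, Nat.add_sub_cancel, face_iterate hαμ, face_add_add]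
  congr 1
  exact hF _ _ fun j hj => by rw [face_of_gt (by omega), iterate_sub_one_apply α hn]

end Faces

section Coboundary

variable {A : Type*} [AddCommGroup A]

def cupHom (μ : A →+ A →+ A) (α : A → A) (m n : ℕ) :
    ((ℕ → A) → A) →+ ((ℕ → A) → A) →+ (ℕ → A) → A :=
  AddMonoidHom.mk' (fun F => AddMonoidHom.mk' (cup (μ · ·) α m n F)
      fun _ _ => funext fun _ => map_add (μ _) _ _)
    fun _ _ => AddMonoidHom.ext fun _ => funext fun _ => by simp [cup]

theorem cupHom_apply (μ : A →+ A →+ A) (α : A → A) (m n : ℕ) (F G : (ℕ → A) → A) :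
    cupHom μ α m n F G = cup (μ · ·) α m n F G := rfl

def hdeltaLeft (μ : A → A → A) (α : A → A) (n : ℕ) (F : (ℕ → A) → A) : (ℕ → A) → A :=
  fun a => μ (α^[n - 1] (a 0)) (F fun j => a (j + 1))

def hdeltaInner (μ : A → A → A) (α : A → A) (n : ℕ) (F : (ℕ → A) → A) : (ℕ → A) → A :=
  ∑ i ∈ range n, (-1 : ℤ) ^ (i + 1) • fun a => F (face μ α i a)

def hdeltaRight (μ : A → A → A) (α : A → A) (n : ℕ) (F : (ℕ → A) → A) : (ℕ → A) → A :=
  (-1 : ℤ) ^ (n + 1) • fun a => μ (F a) (α^[n - 1] (a n))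

theorem hdelta_eq_add (μ : A → A → A) (α : A → A) (n : ℕ) (F : (ℕ → A) → A) :
    hdelta μ α n F = hdeltaLeft μ α n F + hdeltaInner μ α n F + hdeltaRight μ α n F := by
  funext a
  simp only [hdelta, hdeltaLeft, hdeltaInner, hdeltaRight, Pi.add_apply, Finset.sum_apply,
    Pi.smul_apply]
  rfl

variable {μ : A →+ A →+ A} {α : A → A} {F G : (ℕ → A) → A} {m n : ℕ}

theorem hdeltaLeft_cup (hassoc : ∀ x y z, μ (α x) (μ y z) = μ (μ x y) (α z))
    (hG : ∀ a, α (G a) = G fun j => α (a j)) (hm : 1 ≤ m) (hn : 1 ≤ n) :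
    hdeltaLeft (μ · ·) α (m + n) (cup (μ · ·) α m n F G)
      = cup (μ · ·) α (m + 1) n (hdeltaLeft (μ · ·) α m F) G := by
  funext a
  have hα : α^[m + n - 1] (a 0) = α (α^[m - 1] (α^[n - 1] (a 0))) := by
    rw [apply_iterate_sub_one α hm, ← iterate_add_apply]
    congr 1
    omega
  have hG' : (G fun j => α^[m] (a (m + 1 + j))) = α (G fun j => α^[m - 1] (a (m + j + 1))) := by
    simp only [hG, apply_iterate_sub_one α hm, add_right_comm]
  simp only [hdeltaLeft, cup, Nat.add_sub_cancel]
  rw [hα, hG', hassoc]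

theorem hdeltaInner_cup (hαμ : Semiconj₂ α (μ · ·) (μ · ·))
    (hF : ∀ a b : ℕ → A, (∀ j < m, a j = b j) → F a = F b) (hm : 1 ≤ m) (hn : 1 ≤ n) :
    hdeltaInner (μ · ·) α (m + n) (cup (μ · ·) α m n F G)
      = cup (μ · ·) α (m + 1) n (hdeltaInner (μ · ·) α m F) G
        + (-1 : ℤ) ^ m • cup (μ · ·) α m (n + 1) F (hdeltaInner (μ · ·) α n G) := by
  rw [hdeltaInner, sum_range_add]
  simp only [hdeltaInner, ← cupHom_apply, map_sum, map_zsmul, AddMonoidHom.finsetSum_apply,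
    AddMonoidHom.smul_apply, smul_sum, smul_smul, ← pow_add, add_assoc]
  congr 1
  · refine sum_congr rfl fun i hi => ?_
    simp only [cupHom_apply, cup_comp_face_of_lt hαμ hm (mem_range.1 hi)]
  · refine sum_congr rfl fun i _ => ?_
    simp only [cupHom_apply, cup_comp_face_add hαμ hF hn i]

theorem hdeltaRight_cup (hassoc : ∀ x y z, μ (α x) (μ y z) = μ (μ x y) (α z))
    (hF : ∀ a, α (F a) = F fun j => α (a j)) (hm : 1 ≤ m) (hn : 1 ≤ n) :
    hdeltaRight (μ · ·) α (m + n) (cup (μ · ·) α m n F G)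
      = (-1 : ℤ) ^ m • cup (μ · ·) α m (n + 1) F (hdeltaRight (μ · ·) α n G) := by
  funext a
  have hα : α^[m + n - 1] (a (m + n)) = α (α^[n - 1] (α^[m - 1] (a (m + n)))) := by
    rw [apply_iterate_sub_one α hn, ← iterate_add_apply]
    congr 1
    omega
  have hF' : (F fun j => α^[n] (a j)) = α (F fun j => α^[n - 1] (a j)) := by
    simp only [hF, apply_iterate_sub_one α hn]
  simp only [hdeltaRight, cup, Pi.smul_apply, map_zsmul, smul_smul, ← pow_add,
    Nat.add_sub_cancel]
  rw [hα, hF', hassoc, add_assoc]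

theorem cup_hdeltaRight_add_cup_hdeltaLeft
    (hassoc : ∀ x y z, μ (α x) (μ y z) = μ (μ x y) (α z))
    (hF : ∀ a, α (F a) = F fun j => α (a j)) (hG : ∀ a, α (G a) = G fun j => α (a j))
    (hm : 1 ≤ m) (hn : 1 ≤ n) :
    cup (μ · ·) α (m + 1) n (hdeltaRight (μ · ·) α m F) G
      + (-1 : ℤ) ^ m • cup (μ · ·) α m (n + 1) F (hdeltaLeft (μ · ·) α n G) = 0 := by
  funext a
  have hF' : (F fun j => α^[n] (a j)) = α (F fun j => α^[n - 1] (a j)) := by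
    simp only [hF, apply_iterate_sub_one α hn]
  have hG' : (G fun j => α^[m] (a (m + 1 + j))) = α (G fun j => α^[m - 1] (a (m + (j + 1)))) := by
    simp only [hG, apply_iterate_sub_one α hm, add_assoc, add_comm 1]
  simp only [cup, hdeltaRight, hdeltaLeft, Pi.add_apply, Pi.smul_apply, Pi.zero_apply,
    Nat.add_sub_cancel, map_zsmul, AddMonoidHom.smul_apply, add_zero]
  rw [hF', hG', hassoc, (Commute.iterate_iterate_self α (n - 1) (m - 1)).eq, pow_succ,
    mul_neg_one, neg_smul, neg_add_cancel]

end Coboundary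

theorem toCochain_congr {K A : Type*} [Field K] [AddCommGroup A] [Module K A] {m : ℕ}
    (f : MultilinearMap K (fun _ : Fin m => A) A) {a b : ℕ → A} (h : ∀ j < m, a j = b j) :
    toCochain m f a = toCochain m f b :=
  congrArg f (funext fun j => h j j.isLt)

theorem hdelta_cup {A : Type*} [AddCommGroup A] {μ : A →+ A →+ A} {α : A → A}
    {F G : (ℕ → A) → A} {m n : ℕ} (hαμ : Semiconj₂ α (μ · ·) (μ · ·))
    (hassoc : ∀ x y z, μ (α x) (μ y z) = μ (μ x y) (α z))
    (hF_congr : ∀ a b : ℕ → A, (∀ j < m, a j = b j) → F a = F b)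
    (hF : ∀ a, α (F a) = F fun j => α (a j)) (hG : ∀ a, α (G a) = G fun j => α (a j))
    (hm : 1 ≤ m) (hn : 1 ≤ n) :
    hdelta (μ · ·) α (m + n) (cup (μ · ·) α m n F G)
      = cup (μ · ·) α (m + 1) n (hdelta (μ · ·) α m F) G
        + (-1 : ℤ) ^ m • cup (μ · ·) α m (n + 1) F (hdelta (μ · ·) α n G) := by
  have hcancel := cup_hdeltaRight_add_cup_hdeltaLeft hassoc hF hG hm hn
  simp only [hdelta_eq_add, ← cupHom_apply, map_add, AddMonoidHom.add_apply]
  simp only [cupHom_apply]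
  rw [hdeltaLeft_cup hassoc hG hm hn, hdeltaInner_cup hαμ hF_congr hm hn,
    hdeltaRight_cup hassoc hF hm hn]
  linear_combination (norm := module) -hcancel

/-- Let `(A, μ, α)` be a hom-associative algebra. The Hochschild-type
coboundary `δ_α` is a graded derivation of the `α`-twisted cup product:
`δ_α (f ∪_α g) = (δ_α f) ∪_α g + (-1)^m f ∪_α (δ_α g)`. -/
theorem hdelta_cup_leibniz {K A : Type*} [Field K] [AddCommGroup A] [Module K A]
    (μ : A →ₗ[K] A →ₗ[K] A) (α : A →ₗ[K] A)
    (hαμ : ∀ a b : A, α (μ a b) = μ (α a) (α b))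
    (hassoc : ∀ a b c : A, μ (α a) (μ b c) = μ (μ a b) (α c))
    (m n : ℕ) (hm : 1 ≤ m) (hn : 1 ≤ n)
    (f : MultilinearMap K (fun _ : Fin m => A) A)
    (g : MultilinearMap K (fun _ : Fin n => A) A)
    (hf : ∀ a : Fin m → A, α (f a) = f fun t => α (a t))
    (hg : ∀ a : Fin n → A, α (g a) = g fun t => α (a t)) :
    ∀ a : ℕ → A,
      hdelta (fun x y => μ x y) (⇑α) (m + n)
          (cup (fun x y => μ x y) (⇑α) m n (toCochain m f) (toCochain n g)) a
        = cup (fun x y => μ x y) (⇑α) (m + 1) n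
            (hdelta (fun x y => μ x y) (⇑α) m (toCochain m f)) (toCochain n g) a
          + ((-1 : ℤ) ^ m) •
              cup (fun x y => μ x y) (⇑α) m (n + 1) (toCochain m f)
                (hdelta (fun x y => μ x y) (⇑α) n (toCochain n g)) a :=
  congrFun (hdelta_cup (μ := LinearMap.toAddMonoidHom'.comp μ.toAddMonoidHom) hαμ hassoc
    (fun _ _ => toCochain_congr f) (fun _ => hf _) (fun _ => hg _) hm hn)
end

section
/- Let (A, μ, α) be a hom-associative algebra. The α-twisted cup product is graded commutative up to coboundary: if f ∈ C^m_α(A,A) and g ∈ C^n_α(A,A) are cocycles (δ_α f = 0 and δ_α g = 0), then f ∪_α g − (−1)^{mn} g ∪_α f lies in the image of δ_α : C^{m+n-1}_α(A,A) → C^{m+n}_α(A,A). -/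
/-!
The circle product `f ∘ g = ∑ᵢ ± f ∘ᵢ g` is the homotopy. Expanding `δ(f ∘ g)` term by term and
comparing with `f ∘ δg` and `(δf) ∘ g`, all terms cancel in pairs except the two terms of
`(δf) ∘ g` in which `g` sits at the very beginning or the very end of `f`: these are `g ∪ f` and
`f ∪ g`. This gives Gerstenhaber's formula
`δ(f ∘ g) = f ∘ δg + (-1)^(n-1) (δf) ∘ g + (-1)^((m-1)n+1) f ∪ g + (-1)^n g ∪ f`.
For cocycles the first two terms vanish, so `f ∪ g - (-1)^(mn) g ∪ f` is the coboundary of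
`(-1)^((m-1)n+1) f ∘ g`, which is again multilinear and commutes with `α`.
-/

open Finset Function

namespace HomCochain

section Sequences

variable {A : Type*}

def faceSeq (μ : A → A → A) (α : A → A) (k : ℕ) (a : ℕ → A) : ℕ → A :=
  fun j => if j < k then α (a j) else if j = k then μ (a k) (a (k + 1)) else α (a (j + 1))

def hdeltaHead (μ : A → A → A) (α : A → A) (n : ℕ) (G : (ℕ → A) → A) (b : ℕ → A) : A :=
  μ (α^[n - 1] (b 0)) (G fun j => b (j + 1))

def hdeltaTail (μ : A → A → A) (α : A → A) (n : ℕ) (G : (ℕ → A) → A) (b : ℕ → A) : A :=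
  μ (G b) (α^[n - 1] (b n))

-- Zero-based: `compSeq α n G i a` is the argument of `F` in `pcomp α n F G (i + 1) a`.
def compSeq (α : A → A) (n : ℕ) (G : (ℕ → A) → A) (i : ℕ) (a : ℕ → A) : ℕ → A :=
  fun j => if j < i then α^[n - 1] (a j)
    else if j = i then G (fun k => a (i + k)) else α^[n - 1] (a (j + n - 1))

variable (μ : A → A → A) (α : A → A) (n : ℕ) (G : (ℕ → A) → A) (a : ℕ → A) {i j : ℕ}

theorem faceSeq_of_lt (h : j < i) : faceSeq μ α i a j = α (a j) := if_pos h

theorem faceSeq_self : faceSeq μ α i a i = μ (a i) (a (i + 1)) := by simp [faceSeq]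

theorem faceSeq_of_gt (h : i < j) : faceSeq μ α i a j = α (a (j + 1)) := by
  simp [faceSeq, h.ne', h.not_gt]

theorem compSeq_of_lt (h : j < i) : compSeq α n G i a j = α^[n - 1] (a j) := if_pos h

theorem compSeq_self : compSeq α n G i a i = G (fun k => a (i + k)) := by simp [compSeq]

theorem compSeq_of_gt (h : i < j) : compSeq α n G i a j = α^[n - 1] (a (j + n - 1)) := by
  simp [compSeq, h.ne', h.not_gt]

theorem pcomp_succ (F : (ℕ → A) → A) (i : ℕ) :
    pcomp α n F G (i + 1) a = F (compSeq α n G i a) := by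
  simp only [pcomp, Nat.add_lt_add_iff_right, Nat.add_right_cancel_iff,
    Nat.add_sub_cancel]
  rfl

theorem compSeq_update_of_lt {p : ℕ} (hp : p < i) (z : A) :
    compSeq α n G i (update a p z) = update (compSeq α n G i a) p (α^[n - 1] z) := by
  funext j
  rcases lt_trichotomy j i with hc | rfl | hc
  · rw [compSeq_of_lt _ _ _ _ hc]
    rcases eq_or_ne j p with rfl | hj
    · rw [update_self, update_self]
    · rw [update_of_ne hj, update_of_ne hj, compSeq_of_lt _ _ _ _ hc]
  · rw [update_of_ne hp.ne', compSeq_self, compSeq_self]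
    exact congrArg G (funext fun k => update_of_ne (by omega) _ _)
  · rw [update_of_ne (by omega), compSeq_of_gt _ _ _ _ hc, compSeq_of_gt _ _ _ _ hc,
      update_of_ne (by omega)]

theorem iterate_apply_of_equivariant {α : A → A} {F : (ℕ → A) → A}
    (hF : ∀ b : ℕ → A, α (F b) = F (fun j => α (b j))) (p : ℕ) (b : ℕ → A) :
    α^[p] (F b) = F (fun j => α^[p] (b j)) := by
  induction p with
  | zero => rfl
  | succ p ih =>
      simp only [iterate_succ_apply', ih, hF]

theorem iterate_eq_apply_iterate_sub_one {n : ℕ} (hn : 1 ≤ n) (x : A) :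
    α^[n] x = α (α^[n - 1] x) :=
  (congrFun (comp_iterate_pred_of_pos α hn) x).symm

theorem iterate_eq_iterate_sub_one_apply {n : ℕ} (hn : 1 ≤ n) (x : A) :
    α^[n] x = α^[n - 1] (α x) :=
  (congrFun (iterate_pred_comp_of_pos α hn) x).symm

end Sequences

variable {A : Type*} [AddCommGroup A]

theorem hdelta_eq (μ : A → A → A) (α : A → A) (p : ℕ) (F : (ℕ → A) → A) (a : ℕ → A) :
    hdelta μ α p F a =
      hdeltaHead μ α p F a + ∑ k ∈ range p, ((-1 : ℤ) ^ (k + 1)) • F (faceSeq μ α k a)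
        + ((-1 : ℤ) ^ (p + 1)) • hdeltaTail μ α p F a := rfl

theorem circ_eq (α : A → A) (m n : ℕ) (F G : (ℕ → A) → A) (a : ℕ → A) :
    circ α m n F G a = ∑ i ∈ range m, ((-1 : ℤ) ^ ((n - 1) * i)) • F (compSeq α n G i a) := by
  simp only [circ, pcomp_succ]

theorem neg_one_pow_succ_smul (e : ℕ) (x : A) :
    ((-1 : ℤ) ^ (e + 1)) • x = -(((-1 : ℤ) ^ e) • x) := by
  rw [pow_succ, mul_neg_one, neg_smul]

theorem neg_one_pow_eq_of_eq_add_two_mul {a b : ℕ} (c : ℕ) (h : a = b + 2 * c) :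
    (-1 : ℤ) ^ a = (-1) ^ b := by
  rw [h, pow_add, pow_mul]; norm_num

theorem sub_one_mul_add_self {n : ℕ} (hn : 1 ≤ n) (i : ℕ) : (n - 1) * i + i = n * i := by
  rw [← Nat.succ_mul, Nat.succ_eq_add_one, Nat.sub_add_cancel hn]

theorem sum_range_eq_add_sum_range_sub {M : Type*} [AddCommMonoid M] (φ : ℕ → M) {p q : ℕ}
    (h : p ≤ q) :
    ∑ k ∈ range q, φ k = ∑ k ∈ range p, φ k + ∑ t ∈ range (q - p), φ (p + t) := by
  rw [← sum_range_add_sum_Ico _ h, sum_Ico_eq_sum_range]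

section Multilinear

variable {K : Type*} [Field K] [Module K A] {m : ℕ} (f : MultilinearMap K (fun _ : Fin m => A) A)

theorem toCochain_congr {b b' : ℕ → A} (h : ∀ j < m, b j = b' j) :
    toCochain m f b = toCochain m f b' :=
  congrArg f (funext fun j => h j j.2)

theorem map_toCochain {α : A → A} (hf : ∀ v : Fin m → A, α (f v) = f fun t => α (v t))
    (b : ℕ → A) : α (toCochain m f b) = toCochain m f fun j => α (b j) :=
  hf _

theorem toCochain_update (b : ℕ → A) {p : ℕ} (hp : p < m) (z : A) :
    toCochain m f (update b p z) = f.toLinearMap (fun j : Fin m => b j) ⟨p, hp⟩ z := by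
  rw [MultilinearMap.toLinearMap_apply]
  refine congrArg f (funext fun j => ?_)
  rcases eq_or_ne j ⟨p, hp⟩ with rfl | hj
  · simp
  · rw [update_of_ne hj, update_of_ne (Fin.val_ne_of_ne hj)]

theorem toCochain_compSeq (α : A → A) (n : ℕ) (G : (ℕ → A) → A) {i : ℕ} (hi : i < m)
    (a : ℕ → A) :
    toCochain m f (compSeq α n G i a)
      = f.toLinearMap (fun j : Fin m => compSeq α n 0 i a j) ⟨i, hi⟩ (G fun k => a (i + k)) := by
  rw [← toCochain_update]
  refine toCochain_congr f fun j _ => ?_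
  rcases eq_or_ne j i with rfl | hj
  · rw [update_self, compSeq_self]
  · rw [update_of_ne hj]
    simp [compSeq, hj]

theorem toCochain_compSeq_hdelta (μ : A → A → A) (α : A → A) (n : ℕ) (G : (ℕ → A) → A) {i : ℕ}
    (hi : i < m) (a : ℕ → A) :
    toCochain m f (compSeq α (n + 1) (hdelta μ α n G) i a)
      = toCochain m f (compSeq α (n + 1) (hdeltaHead μ α n G) i a)
        + ∑ k ∈ range n, ((-1 : ℤ) ^ (k + 1)) •
            toCochain m f (compSeq α (n + 1) (fun b => G (faceSeq μ α k b)) i a)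
        + ((-1 : ℤ) ^ (n + 1)) • toCochain m f (compSeq α (n + 1) (hdeltaTail μ α n G) i a) := by
  simp only [toCochain_compSeq f _ _ _ hi, hdelta_eq, map_add, map_sum, map_zsmul]

end Multilinear

section Expansion

variable {K : Type*} [Field K] [Module K A]
variable (μ : A →ₗ[K] A →ₗ[K] A) (α : A →ₗ[K] A) {m n : ℕ}
variable (f : MultilinearMap K (fun _ : Fin m => A) A) (g : MultilinearMap K (fun _ : Fin n => A) A)

theorem hdeltaHead_compSeq_succ (hm : 1 ≤ m) (hn : 1 ≤ n) (i : ℕ) (a : ℕ → A) :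
    hdeltaHead (μ · ·) α m (toCochain m f) (compSeq α n (toCochain n g) (i + 1) a)
      = μ (α^[m + n - 2] (a 0))
          (pcomp α n (toCochain m f) (toCochain n g) (i + 1) fun j => a (j + 1)) := by
  rw [hdeltaHead, pcomp_succ]
  congr 1
  · rw [compSeq_of_lt _ _ _ _ (by omega), ← iterate_add_apply,
      show m - 1 + (n - 1) = m + n - 2 by omega]
  · refine toCochain_congr f fun j _ => ?_
    rcases lt_trichotomy j i with hc | rfl | hc
    · rw [compSeq_of_lt _ _ _ _ (by omega), compSeq_of_lt _ _ _ _ hc]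
    · rw [compSeq_self, compSeq_self]
      simp only [add_right_comm]
    · rw [compSeq_of_gt _ _ _ _ (by omega), compSeq_of_gt _ _ _ _ hc,
        show j + 1 + n - 1 = j + n - 1 + 1 by omega]

theorem hdeltaHead_compSeq_zero (hn : 1 ≤ n)
    (hg : ∀ v : Fin n → A, α (g v) = g fun t => α (v t)) (a : ℕ → A) :
    hdeltaHead (μ · ·) α m (toCochain m f) (compSeq α n (toCochain n g) 0 a)
      = cup (μ · ·) α n m (toCochain n g) (toCochain m f) a := by
  rw [hdeltaHead, cup, compSeq_self, iterate_apply_of_equivariant (map_toCochain g hg)]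
  congr 1
  · simp only [zero_add]
  · refine toCochain_congr f fun j _ => ?_
    rw [compSeq_of_gt _ _ _ _ (by omega), show j + 1 + n - 1 = n + j by omega]

theorem hdeltaTail_compSeq (hn : 1 ≤ n) {i : ℕ} (hi : i < m) (a : ℕ → A) :
    hdeltaTail (μ · ·) α m (toCochain m f) (compSeq α n (toCochain n g) i a)
      = μ (pcomp α n (toCochain m f) (toCochain n g) (i + 1) a)
          (α^[m + n - 2] (a (m + n - 1))) := by
  rw [hdeltaTail, pcomp_succ, compSeq_of_gt _ _ _ _ hi, ← iterate_add_apply,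
    show m - 1 + (n - 1) = m + n - 2 by omega]

theorem hdeltaTail_compSeq_self (hg : ∀ v : Fin n → A, α (g v) = g fun t => α (v t))
    (a : ℕ → A) :
    hdeltaTail (μ · ·) α m (toCochain m f) (compSeq α n (toCochain n g) m a)
      = cup (μ · ·) α m n (toCochain m f) (toCochain n g) a := by
  rw [hdeltaTail, cup, compSeq_self, iterate_apply_of_equivariant (map_toCochain g hg)]
  rw [toCochain_congr f fun j hj => compSeq_of_lt α n (toCochain n g) a hj]

theorem faceSeq_compSeq_succ_of_lt (hαμ : ∀ x y : A, α (μ x y) = μ (α x) (α y))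
    (hg : ∀ v : Fin n → A, α (g v) = g fun t => α (v t)) {i k : ℕ} (hk : k < i) (a : ℕ → A) :
    toCochain m f (faceSeq (μ · ·) α k (compSeq α n (toCochain n g) (i + 1) a))
      = pcomp α n (toCochain m f) (toCochain n g) (i + 1) (faceSeq (μ · ·) α k a) := by
  rw [pcomp_succ]
  refine toCochain_congr f fun j _ => ?_
  rcases lt_trichotomy j k with h1 | rfl | h1
  · rw [faceSeq_of_lt _ _ _ h1, compSeq_of_lt _ _ _ _ (by omega), compSeq_of_lt _ _ _ _ (by omega),
      faceSeq_of_lt _ _ _ h1, Commute.iterate_self]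
  · rw [faceSeq_self, compSeq_of_lt _ _ _ _ (by omega), compSeq_of_lt _ _ _ _ (by omega),
      compSeq_of_lt _ _ _ _ (by omega), faceSeq_self, Semiconj₂.iterate hαμ]
  · rcases lt_trichotomy j i with h2 | rfl | h2
    · rw [faceSeq_of_gt _ _ _ h1, compSeq_of_lt _ _ _ _ (by omega), compSeq_of_lt _ _ _ _ h2,
        faceSeq_of_gt _ _ _ h1, Commute.iterate_self]
    · rw [faceSeq_of_gt _ _ _ h1, compSeq_self, compSeq_self, map_toCochain g hg]
      refine toCochain_congr g fun t _ => ?_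
      rw [faceSeq_of_gt _ _ _ (by omega), show j + 1 + t = j + t + 1 by omega]
    · rw [faceSeq_of_gt _ _ _ h1, compSeq_of_gt _ _ _ _ (by omega), compSeq_of_gt _ _ _ _ h2,
        faceSeq_of_gt _ _ _ (by omega), Commute.iterate_self,
        show j + 1 + n - 1 = j + n - 1 + 1 by omega]

theorem faceSeq_compSeq_succ_self (hn : 1 ≤ n) (i : ℕ) (a : ℕ → A) :
    toCochain m f (faceSeq (μ · ·) α i (compSeq α n (toCochain n g) (i + 1) a))
      = toCochain m f (compSeq α (n + 1) (hdeltaHead (μ · ·) α n (toCochain n g)) i a) := by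
  refine toCochain_congr f fun j _ => ?_
  rcases lt_trichotomy j i with h | rfl | h
  · rw [faceSeq_of_lt _ _ _ h, compSeq_of_lt _ _ _ _ (by omega), compSeq_of_lt _ _ _ _ h,
      Nat.add_sub_cancel, iterate_eq_apply_iterate_sub_one _ hn]
  · rw [faceSeq_self, compSeq_of_lt _ _ _ _ (by omega), compSeq_self, compSeq_self, hdeltaHead,
      add_zero]
    exact congrArg _ (congrArg _ (funext fun k => congrArg a (by omega)))
  · rw [faceSeq_of_gt _ _ _ h, compSeq_of_gt _ _ _ _ (by omega), compSeq_of_gt _ _ _ _ h,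
      Nat.add_sub_cancel, iterate_eq_apply_iterate_sub_one _ hn,
      show j + 1 + n - 1 = j + (n + 1) - 1 by omega]

theorem faceSeq_compSeq_self (hn : 1 ≤ n) (i : ℕ) (a : ℕ → A) :
    toCochain m f (faceSeq (μ · ·) α i (compSeq α n (toCochain n g) i a))
      = toCochain m f (compSeq α (n + 1) (hdeltaTail (μ · ·) α n (toCochain n g)) i a) := by
  refine toCochain_congr f fun j _ => ?_
  rcases lt_trichotomy j i with h | rfl | h
  · rw [faceSeq_of_lt _ _ _ h, compSeq_of_lt _ _ _ _ h, compSeq_of_lt _ _ _ _ h,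
      Nat.add_sub_cancel, iterate_eq_apply_iterate_sub_one _ hn]
  · rw [faceSeq_self, compSeq_self, compSeq_of_gt _ _ _ _ (by omega), compSeq_self, hdeltaTail,
      show j + 1 + n - 1 = j + n by omega]
  · rw [faceSeq_of_gt _ _ _ h, compSeq_of_gt _ _ _ _ (by omega), compSeq_of_gt _ _ _ _ h,
      Nat.add_sub_cancel, iterate_eq_apply_iterate_sub_one _ hn,
      show j + 1 + n - 1 = j + (n + 1) - 1 by omega]

theorem faceSeq_compSeq_of_gt (hαμ : ∀ x y : A, α (μ x y) = μ (α x) (α y))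
    (hg : ∀ v : Fin n → A, α (g v) = g fun t => α (v t)) (i t : ℕ) (a : ℕ → A) :
    toCochain m f (faceSeq (μ · ·) α (i + 1 + t) (compSeq α n (toCochain n g) i a))
      = pcomp α n (toCochain m f) (toCochain n g) (i + 1) (faceSeq (μ · ·) α (i + n + t) a) := by
  rw [pcomp_succ]
  refine toCochain_congr f fun j _ => ?_
  rcases lt_trichotomy j (i + 1 + t) with h1 | rfl | h1
  · rcases lt_trichotomy j i with h2 | rfl | h2
    · rw [faceSeq_of_lt _ _ _ h1, compSeq_of_lt _ _ _ _ h2, compSeq_of_lt _ _ _ _ h2,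
        faceSeq_of_lt _ _ _ (by omega), Commute.iterate_self]
    · rw [faceSeq_of_lt _ _ _ h1, compSeq_self, compSeq_self, map_toCochain g hg]
      exact toCochain_congr g fun k _ => (faceSeq_of_lt _ _ _ (by omega)).symm
    · rw [faceSeq_of_lt _ _ _ h1, compSeq_of_gt _ _ _ _ h2, compSeq_of_gt _ _ _ _ h2,
        faceSeq_of_lt _ _ _ (by omega), Commute.iterate_self]
  · rw [faceSeq_self, compSeq_of_gt _ _ _ _ (by omega), compSeq_of_gt _ _ _ _ (by omega),
      compSeq_of_gt _ _ _ _ (by omega), show i + 1 + t + n - 1 = i + n + t by omega,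
      show i + 1 + t + 1 + n - 1 = i + n + t + 1 by omega, faceSeq_self, Semiconj₂.iterate hαμ]
  · rw [faceSeq_of_gt _ _ _ h1, compSeq_of_gt _ _ _ _ (by omega), compSeq_of_gt _ _ _ _ (by omega),
      faceSeq_of_gt _ _ _ (by omega), Commute.iterate_self,
      show j + 1 + n - 1 = j + n - 1 + 1 by omega]

theorem compSeq_faceSeq_window (hn : 1 ≤ n) (i : ℕ) {k : ℕ} (hk : k < n) (a : ℕ → A) :
    toCochain m f (compSeq α (n + 1) (fun b => toCochain n g (faceSeq (μ · ·) α k b)) i a)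
      = pcomp α n (toCochain m f) (toCochain n g) (i + 1) (faceSeq (μ · ·) α (i + k) a) := by
  rw [pcomp_succ]
  refine toCochain_congr f fun j _ => ?_
  rcases lt_trichotomy j i with h1 | rfl | h1
  · rw [compSeq_of_lt _ _ _ _ h1, compSeq_of_lt _ _ _ _ h1, faceSeq_of_lt _ _ _ (by omega),
      Nat.add_sub_cancel, iterate_eq_iterate_sub_one_apply _ hn]
  · rw [compSeq_self, compSeq_self]
    refine toCochain_congr g fun l _ => ?_
    rcases lt_trichotomy l k with h2 | rfl | h2
    · rw [faceSeq_of_lt _ _ _ h2, faceSeq_of_lt _ _ _ (by omega)]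
    · rw [faceSeq_self, faceSeq_self, add_assoc]
    · rw [faceSeq_of_gt _ _ _ h2, faceSeq_of_gt _ _ _ (by omega), add_assoc]
  · rw [compSeq_of_gt _ _ _ _ h1, compSeq_of_gt _ _ _ _ h1, faceSeq_of_gt _ _ _ (by omega),
      Nat.add_sub_cancel, iterate_eq_iterate_sub_one_apply _ hn,
      show j + n - 1 + 1 = j + (n + 1) - 1 by omega]

-- The terms of `δ(f ∘ g)` and `f ∘ δg`, grouped by where the contracted pair sits relative to the
-- inserted `g`.
def headSum (a : ℕ → A) : A :=
  ∑ i ∈ range m, ((-1 : ℤ) ^ ((n - 1) * i)) •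
    μ (α^[m + n - 2] (a 0)) (pcomp α n (toCochain m f) (toCochain n g) (i + 1) fun j => a (j + 1))

def tailSum (a : ℕ → A) : A :=
  ∑ i ∈ range m, ((-1 : ℤ) ^ ((n - 1) * i + (m + n))) •
    μ (pcomp α n (toCochain m f) (toCochain n g) (i + 1) a) (α^[m + n - 2] (a (m + n - 1)))

def facesBeforeSum (a : ℕ → A) : A :=
  ∑ i ∈ range m, ∑ k ∈ range i, ((-1 : ℤ) ^ ((n - 1) * i + (k + 1))) •
    pcomp α n (toCochain m f) (toCochain n g) (i + 1) (faceSeq (μ · ·) α k a)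

def facesInsideSum (a : ℕ → A) : A :=
  ∑ i ∈ range m, ∑ k ∈ range n, ((-1 : ℤ) ^ (n * i + (k + 1))) •
    pcomp α n (toCochain m f) (toCochain n g) (i + 1) (faceSeq (μ · ·) α (i + k) a)

def facesAfterSum (a : ℕ → A) : A :=
  ∑ i ∈ range m, ∑ t ∈ range (m - 1 - i), ((-1 : ℤ) ^ ((n - 1) * i + (i + n + t + 1))) •
    pcomp α n (toCochain m f) (toCochain n g) (i + 1) (faceSeq (μ · ·) α (i + n + t) a)

def innerHeadSum (a : ℕ → A) : A :=
  ∑ i ∈ range m, ((-1 : ℤ) ^ (n * i)) •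
    toCochain m f (compSeq α (n + 1) (hdeltaHead (μ · ·) α n (toCochain n g)) i a)

def innerTailSum (a : ℕ → A) : A :=
  ∑ i ∈ range m, ((-1 : ℤ) ^ (n * i + n)) •
    toCochain m f (compSeq α (n + 1) (hdeltaTail (μ · ·) α n (toCochain n g)) i a)

theorem hdeltaHead_circ (a : ℕ → A) :
    hdeltaHead (μ · ·) α (m + n - 1) (circ α m n (toCochain m f) (toCochain n g)) a
      = headSum μ α f g a := by
  simp only [hdeltaHead, headSum, circ, map_sum, map_zsmul, show m + n - 1 - 1 = m + n - 2 by omega]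

theorem hdeltaTail_circ (hm : 1 ≤ m) (a : ℕ → A) :
    ((-1 : ℤ) ^ (m + n - 1 + 1)) •
        hdeltaTail (μ · ·) α (m + n - 1) (circ α m n (toCochain m f) (toCochain n g)) a
      = tailSum μ α f g a := by
  rw [hdeltaTail, circ, LinearMap.map_sum₂, smul_sum, show m + n - 1 - 1 = m + n - 2 by omega]
  refine sum_congr rfl fun i _ => ?_
  rw [map_zsmul, LinearMap.smul_apply, smul_smul, ← pow_add]
  congr 2
  omega

theorem sum_faceSeq_circ (hn : 1 ≤ n) (a : ℕ → A) :
    ∑ k ∈ range (m + n - 1), ((-1 : ℤ) ^ (k + 1)) •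
        circ α m n (toCochain m f) (toCochain n g) (faceSeq (μ · ·) α k a)
      = facesBeforeSum μ α f g a + facesInsideSum μ α f g a + facesAfterSum μ α f g a := by
  simp only [circ, smul_sum, smul_smul, ← pow_add, facesBeforeSum, facesInsideSum,
    facesAfterSum]
  rw [Finset.sum_comm, ← sum_add_distrib, ← sum_add_distrib]
  refine sum_congr rfl fun i hi => ?_
  have hi' := mem_range.mp hi
  rw [sum_range_eq_add_sum_range_sub _ (show i ≤ m + n - 1 by omega),
    show m + n - 1 - i = n + (m - 1 - i) by omega, sum_range_add, ← add_assoc]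
  congr 1
  congr 1
  · refine sum_congr rfl fun k _ => ?_
    congr 2
    omega
  · refine sum_congr rfl fun k _ => ?_
    congr 2
    rw [← sub_one_mul_add_self hn i]
    omega
  · refine sum_congr rfl fun k _ => ?_
    rw [← add_assoc]
    congr 2
    omega

theorem hdelta_circ_eq (hm : 1 ≤ m) (hn : 1 ≤ n) (a : ℕ → A) :
    hdelta (μ · ·) α (m + n - 1) (circ α m n (toCochain m f) (toCochain n g)) a
      = headSum μ α f g a + facesBeforeSum μ α f g a + facesInsideSum μ α f g a
        + facesAfterSum μ α f g a + tailSum μ α f g a := by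
  rw [hdelta_eq, hdeltaHead_circ μ α f g, sum_faceSeq_circ μ α f g hn,
    hdeltaTail_circ μ α f g hm]
  abel

theorem sum_pcomp_hdelta_right (hn : 1 ≤ n) (a : ℕ → A) :
    ∑ i ∈ range m, ((-1 : ℤ) ^ (n * i)) •
        pcomp α (n + 1) (toCochain m f) (hdelta (μ · ·) α n (toCochain n g)) (i + 1) a
      = innerHeadSum μ α f g a + facesInsideSum μ α f g a - innerTailSum μ α f g a := by
  simp only [pcomp_succ]
  rw [innerHeadSum, facesInsideSum, innerTailSum, ← sum_add_distrib, ← sum_sub_distrib]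
  refine sum_congr rfl fun i hi => ?_
  rw [toCochain_compSeq_hdelta f _ _ _ _ (mem_range.mp hi), smul_add, smul_add, smul_sum,
    smul_smul, ← pow_add, ← add_assoc, neg_one_pow_succ_smul, ← sub_eq_add_neg]
  congr 2
  refine sum_congr rfl fun k hk => ?_
  rw [compSeq_faceSeq_window μ α f g hn i (mem_range.mp hk), smul_smul, ← pow_add]

theorem sum_hdeltaHead_compSeq (hm : 1 ≤ m) (hn : 1 ≤ n)
    (hg : ∀ v : Fin n → A, α (g v) = g fun t => α (v t)) (a : ℕ → A) :
    ((-1 : ℤ) ^ (n - 1)) • ∑ i ∈ range (m + 1), ((-1 : ℤ) ^ ((n - 1) * i)) •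
        hdeltaHead (μ · ·) α m (toCochain m f) (compSeq α n (toCochain n g) i a)
      = headSum μ α f g a
        + ((-1 : ℤ) ^ (n - 1)) • cup (μ · ·) α n m (toCochain n g) (toCochain m f) a := by
  rw [sum_range_succ', smul_add, mul_zero, pow_zero, one_smul,
    hdeltaHead_compSeq_zero μ α f g hn hg, smul_sum, headSum]
  congr 1
  refine sum_congr rfl fun i _ => ?_
  rw [hdeltaHead_compSeq_succ μ α f g hm hn, smul_smul, ← pow_add, Nat.mul_succ]
  exact congrArg₂ _ (neg_one_pow_eq_of_eq_add_two_mul (n - 1) (by omega)) rfl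

theorem sum_hdeltaTail_compSeq (hm : 1 ≤ m) (hn : 1 ≤ n)
    (hg : ∀ v : Fin n → A, α (g v) = g fun t => α (v t)) (a : ℕ → A) :
    ((-1 : ℤ) ^ (n - 1)) • ∑ i ∈ range (m + 1), ((-1 : ℤ) ^ ((n - 1) * i + (m + 1))) •
        hdeltaTail (μ · ·) α m (toCochain m f) (compSeq α n (toCochain n g) i a)
      = tailSum μ α f g a
        + ((-1 : ℤ) ^ ((m - 1) * n)) • cup (μ · ·) α m n (toCochain m f) (toCochain n g) a := by
  rw [sum_range_succ, smul_add, smul_sum, smul_smul, ← pow_add,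
    hdeltaTail_compSeq_self μ α f g hg, tailSum]
  congr 1
  · refine sum_congr rfl fun i hi => ?_
    rw [hdeltaTail_compSeq μ α f g hn (mem_range.mp hi), smul_smul, ← pow_add]
    congr 2
    omega
  · obtain ⟨q, rfl⟩ := Nat.exists_eq_add_of_le' hm
    obtain ⟨p, rfl⟩ := Nat.exists_eq_add_of_le' hn
    refine congrArg₂ _ (neg_one_pow_eq_of_eq_add_two_mul (p + 1) ?_) rfl
    simp only [Nat.add_sub_cancel]
    ring

theorem sum_faceSeq_compSeq_below (hn : 1 ≤ n) (hαμ : ∀ x y : A, α (μ x y) = μ (α x) (α y))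
    (hg : ∀ v : Fin n → A, α (g v) = g fun t => α (v t)) (a : ℕ → A) :
    ((-1 : ℤ) ^ (n - 1)) • ∑ i ∈ range (m + 1), ((-1 : ℤ) ^ ((n - 1) * i)) •
        ∑ k ∈ range i, ((-1 : ℤ) ^ (k + 1)) •
          toCochain m f (faceSeq (μ · ·) α k (compSeq α n (toCochain n g) i a))
      = facesBeforeSum μ α f g a - innerHeadSum μ α f g a := by
  rw [sum_range_succ', sum_range_zero, smul_zero, add_zero, smul_sum, facesBeforeSum,
    innerHeadSum, ← sum_sub_distrib]
  refine sum_congr rfl fun i _ => ?_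
  rw [sum_range_succ, faceSeq_compSeq_succ_self μ α f g hn]
  simp only [smul_add, smul_sum, smul_smul, ← pow_add]
  rw [sub_eq_add_neg, ← neg_one_pow_succ_smul]
  congr 1
  · refine sum_congr rfl fun k hk => ?_
    rw [faceSeq_compSeq_succ_of_lt μ α f g hαμ hg (mem_range.mp hk)]
    exact congrArg₂ _ (neg_one_pow_eq_of_eq_add_two_mul (n - 1) (by rw [Nat.mul_succ]; omega)) rfl
  · refine congrArg₂ _ (neg_one_pow_eq_of_eq_add_two_mul (n - 1) ?_) rfl
    rw [Nat.mul_succ, ← sub_one_mul_add_self hn i]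
    omega

theorem sum_faceSeq_compSeq_above (hn : 1 ≤ n) (hαμ : ∀ x y : A, α (μ x y) = μ (α x) (α y))
    (hg : ∀ v : Fin n → A, α (g v) = g fun t => α (v t)) (a : ℕ → A) :
    ((-1 : ℤ) ^ (n - 1)) • ∑ i ∈ range (m + 1), ((-1 : ℤ) ^ ((n - 1) * i)) •
        ∑ t ∈ range (m - i), ((-1 : ℤ) ^ (i + t + 1)) •
          toCochain m f (faceSeq (μ · ·) α (i + t) (compSeq α n (toCochain n g) i a))
      = facesAfterSum μ α f g a + innerTailSum μ α f g a := by
  rw [sum_range_succ, Nat.sub_self, sum_range_zero, smul_zero, add_zero, smul_sum,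
    facesAfterSum, innerTailSum, ← sum_add_distrib]
  refine sum_congr rfl fun i hi => ?_
  rw [show m - i = m - 1 - i + 1 by have := mem_range.mp hi; omega, sum_range_succ', add_zero,
    faceSeq_compSeq_self μ α f g hn]
  simp only [smul_add, smul_sum, smul_smul, ← pow_add]
  congr 1
  · refine sum_congr rfl fun t _ => ?_
    rw [show i + (t + 1) = i + 1 + t by omega,
      faceSeq_compSeq_of_gt μ α f g hαμ hg]
    congr 2
    omega
  · congr 2
    rw [← sub_one_mul_add_self hn i]
    omega

theorem sum_pcomp_hdelta_left (hm : 1 ≤ m) (hn : 1 ≤ n)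
    (hαμ : ∀ x y : A, α (μ x y) = μ (α x) (α y))
    (hg : ∀ v : Fin n → A, α (g v) = g fun t => α (v t)) (a : ℕ → A) :
    ((-1 : ℤ) ^ (n - 1)) • ∑ i ∈ range (m + 1), ((-1 : ℤ) ^ ((n - 1) * i)) •
        pcomp α n (hdelta (μ · ·) α m (toCochain m f)) (toCochain n g) (i + 1) a
      = headSum μ α f g a + (facesBeforeSum μ α f g a - innerHeadSum μ α f g a)
        + (facesAfterSum μ α f g a + innerTailSum μ α f g a) + tailSum μ α f g a
        + ((-1 : ℤ) ^ (n - 1)) • cup (μ · ·) α n m (toCochain n g) (toCochain m f) a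
        + ((-1 : ℤ) ^ ((m - 1) * n)) • cup (μ · ·) α m n (toCochain m f) (toCochain n g) a := by
  have hsplit : ∀ i ∈ range (m + 1),
      ((-1 : ℤ) ^ ((n - 1) * i)) •
          pcomp α n (hdelta (μ · ·) α m (toCochain m f)) (toCochain n g) (i + 1) a
        = ((-1 : ℤ) ^ ((n - 1) * i)) •
            hdeltaHead (μ · ·) α m (toCochain m f) (compSeq α n (toCochain n g) i a)
          + ((-1 : ℤ) ^ ((n - 1) * i)) • ∑ k ∈ range i, ((-1 : ℤ) ^ (k + 1)) •
              toCochain m f (faceSeq (μ · ·) α k (compSeq α n (toCochain n g) i a))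
          + ((-1 : ℤ) ^ ((n - 1) * i)) • ∑ t ∈ range (m - i), ((-1 : ℤ) ^ (i + t + 1)) •
              toCochain m f (faceSeq (μ · ·) α (i + t) (compSeq α n (toCochain n g) i a))
          + ((-1 : ℤ) ^ ((n - 1) * i + (m + 1))) •
              hdeltaTail (μ · ·) α m (toCochain m f) (compSeq α n (toCochain n g) i a) := by
    intro i hi
    rw [pcomp_succ, hdelta_eq, sum_range_eq_add_sum_range_sub _ (mem_range_succ_iff.mp hi)]
    simp only [smul_add, smul_smul, ← pow_add, add_assoc]
  rw [sum_congr rfl hsplit, sum_add_distrib, sum_add_distrib, sum_add_distrib, smul_add, smul_add,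
    smul_add, sum_hdeltaHead_compSeq μ α f g hm hn hg, sum_faceSeq_compSeq_below μ α f g hn hαμ hg,
    sum_faceSeq_compSeq_above μ α f g hn hαμ hg, sum_hdeltaTail_compSeq μ α f g hm hn hg]
  abel

theorem hdelta_circ (hm : 1 ≤ m) (hn : 1 ≤ n) (hαμ : ∀ x y : A, α (μ x y) = μ (α x) (α y))
    (hg : ∀ v : Fin n → A, α (g v) = g fun t => α (v t)) (a : ℕ → A) :
    hdelta (μ · ·) α (m + n - 1) (circ α m n (toCochain m f) (toCochain n g)) a
      = ∑ i ∈ range m, ((-1 : ℤ) ^ (n * i)) •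
            pcomp α (n + 1) (toCochain m f) (hdelta (μ · ·) α n (toCochain n g)) (i + 1) a
        + ((-1 : ℤ) ^ (n - 1)) • ∑ i ∈ range (m + 1), ((-1 : ℤ) ^ ((n - 1) * i)) •
            pcomp α n (hdelta (μ · ·) α m (toCochain m f)) (toCochain n g) (i + 1) a
        + ((-1 : ℤ) ^ ((m - 1) * n + 1)) • cup (μ · ·) α m n (toCochain m f) (toCochain n g) a
        + ((-1 : ℤ) ^ n) • cup (μ · ·) α n m (toCochain n g) (toCochain m f) a := by
  rw [hdelta_circ_eq μ α f g hm hn, sum_pcomp_hdelta_right μ α f g hn,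
    sum_pcomp_hdelta_left μ α f g hm hn hαμ hg, neg_one_pow_succ_smul]
  obtain ⟨p, rfl⟩ := Nat.exists_eq_add_of_le' hn
  rw [Nat.add_sub_cancel, neg_one_pow_succ_smul p]
  abel

theorem hdelta_zsmul (N : ℕ) (H : (ℕ → A) → A) (c : ℤ) (a : ℕ → A) :
    hdelta (μ · ·) α N (fun b => c • H b) a = c • hdelta (μ · ·) α N H a := by
  simp only [hdelta_eq, hdeltaHead, hdeltaTail, map_zsmul, LinearMap.smul_apply, smul_add,
    smul_sum, smul_comm c]

theorem hdelta_circ_of_cocycles (hm : 1 ≤ m) (hn : 1 ≤ n)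
    (hαμ : ∀ x y : A, α (μ x y) = μ (α x) (α y))
    (hg : ∀ v : Fin n → A, α (g v) = g fun t => α (v t))
    (hfz : ∀ b, hdelta (μ · ·) α m (toCochain m f) b = 0)
    (hgz : ∀ b, hdelta (μ · ·) α n (toCochain n g) b = 0) (a : ℕ → A) :
    hdelta (μ · ·) α (m + n - 1) (circ α m n (toCochain m f) (toCochain n g)) a
      = ((-1 : ℤ) ^ ((m - 1) * n + 1)) • cup (μ · ·) α m n (toCochain m f) (toCochain n g) a
        + ((-1 : ℤ) ^ n) • cup (μ · ·) α n m (toCochain n g) (toCochain m f) a := by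
  have hright : ∀ i ∈ range m,
      pcomp α (n + 1) (toCochain m f) (hdelta (μ · ·) α n (toCochain n g)) (i + 1) a = 0 :=
    fun i hi => by rw [pcomp_succ, toCochain_compSeq f _ _ _ (mem_range.mp hi), hgz, map_zero]
  have hleft : ∀ i ∈ range (m + 1),
      pcomp α n (hdelta (μ · ·) α m (toCochain m f)) (toCochain n g) (i + 1) a = 0 :=
    fun i _ => by rw [pcomp_succ, hfz]
  rw [hdelta_circ μ α f g hm hn hαμ hg, sum_eq_zero fun i hi => by rw [hright i hi, smul_zero],
    sum_eq_zero fun i hi => by rw [hleft i hi, smul_zero], smul_zero, zero_add, zero_add]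

end Expansion

section CircMultilinear

def zeroExtend {M : ℕ} (v : Fin M → A) : ℕ → A := fun j => if h : j < M then v ⟨j, h⟩ else 0

theorem zeroExtend_of_lt {M : ℕ} (v : Fin M → A) {j : ℕ} (h : j < M) :
    zeroExtend v j = v ⟨j, h⟩ :=
  dif_pos h

theorem zeroExtend_update {M : ℕ} [DecidableEq (Fin M)] (v : Fin M → A) (t : Fin M) (x : A) :
    zeroExtend (update v t x) = update (zeroExtend v) t x := by
  funext j
  by_cases h : j < M
  · rcases eq_or_ne (⟨j, h⟩ : Fin M) t with rfl | ht
    · rw [zeroExtend_of_lt _ h, update_self, update_self]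
    · rw [zeroExtend_of_lt _ h, update_of_ne ht, update_of_ne (Fin.val_ne_of_ne ht),
        zeroExtend_of_lt _ h]
  · rw [update_of_ne (by omega)]
    simp only [zeroExtend, dif_neg h]

variable {K : Type*} [Field K] [Module K A] (α : A →ₗ[K] A) {m n : ℕ}
variable (f : MultilinearMap K (fun _ : Fin m => A) A) (g : MultilinearMap K (fun _ : Fin n => A) A)

theorem zeroExtend_map {M : ℕ} (v : Fin M → A) :
    zeroExtend (fun t => α (v t)) = fun j => α (zeroExtend v j) := by
  funext j
  by_cases h : j < M
  · rw [zeroExtend_of_lt _ h, zeroExtend_of_lt _ h]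
  · simp only [zeroExtend, dif_neg h, map_zero]

theorem toCochain_compSeq_congr (hn : 1 ≤ n) {i : ℕ} (hi : i < m) {b b' : ℕ → A}
    (h : ∀ j < m + n - 1, b j = b' j) :
    toCochain m f (compSeq α n (toCochain n g) i b)
      = toCochain m f (compSeq α n (toCochain n g) i b') := by
  refine toCochain_congr f fun j _ => ?_
  rcases lt_trichotomy j i with hc | rfl | hc
  · rw [compSeq_of_lt _ _ _ _ hc, compSeq_of_lt _ _ _ _ hc, h j (by omega)]
  · rw [compSeq_self, compSeq_self]
    exact toCochain_congr g fun k _ => h (j + k) (by omega)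
  · rw [compSeq_of_gt _ _ _ _ hc, compSeq_of_gt _ _ _ _ hc, h (j + n - 1) (by omega)]

theorem compSeq_map (hg : ∀ v : Fin n → A, α (g v) = g fun t => α (v t)) (i : ℕ) (b : ℕ → A) :
    (fun j => α (compSeq α n (toCochain n g) i b j))
      = compSeq α n (toCochain n g) i (fun j => α (b j)) := by
  funext j
  rcases lt_trichotomy j i with hc | rfl | hc
  · rw [compSeq_of_lt _ _ _ _ hc, compSeq_of_lt _ _ _ _ hc, Commute.self_iterate α]
  · rw [compSeq_self, compSeq_self, map_toCochain g hg]
  · rw [compSeq_of_gt _ _ _ _ hc, compSeq_of_gt _ _ _ _ hc, Commute.self_iterate α]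

theorem toCochain_compSeq_update_of_le {i p : ℕ} (hp : i + n ≤ p) (a : ℕ → A) (z : A) :
    toCochain m f (compSeq α n (toCochain n g) i (update a p z))
      = toCochain m f (update (compSeq α n (toCochain n g) i a) (p - n + 1) (α^[n - 1] z)) := by
  refine toCochain_congr f fun j _ => ?_
  rcases lt_trichotomy j i with hc | rfl | hc
  · rw [compSeq_of_lt _ _ _ _ hc, update_of_ne (by omega), update_of_ne (by omega),
      compSeq_of_lt _ _ _ _ hc]
  · rw [update_of_ne (by omega), compSeq_self, compSeq_self]
    exact toCochain_congr g fun k _ => update_of_ne (by omega) _ _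
  · rw [compSeq_of_gt _ _ _ _ hc]
    rcases eq_or_ne j (p - n + 1) with rfl | hj
    · rw [update_self, show p - n + 1 + n - 1 = p by omega, update_self]
    · rw [update_of_ne hj, update_of_ne (by omega), compSeq_of_gt _ _ _ _ hc]

theorem toCochain_compSeq_update_window {i p : ℕ} (hip : i ≤ p) (hp : p < i + n) (a : ℕ → A)
    (z : A) :
    toCochain m f (compSeq α n (toCochain n g) i (update a p z))
      = toCochain m f (update (compSeq α n (toCochain n g) i a) i
          (toCochain n g (update (fun k => a (i + k)) (p - i) z))) := by
  refine toCochain_congr f fun j _ => ?_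
  rcases lt_trichotomy j i with hc | rfl | hc
  · rw [compSeq_of_lt _ _ _ _ hc, update_of_ne (by omega), update_of_ne (by omega),
      compSeq_of_lt _ _ _ _ hc]
  · rw [compSeq_self, update_self]
    refine toCochain_congr g fun k _ => ?_
    rcases eq_or_ne k (p - j) with rfl | hk
    · rw [update_self, show j + (p - j) = p by omega, update_self]
    · rw [update_of_ne hk, update_of_ne (by omega)]
  · rw [compSeq_of_gt _ _ _ _ hc, update_of_ne (by omega), update_of_ne (by omega),
      compSeq_of_gt _ _ _ _ hc]

theorem exists_linearMap_compSeq_update {i p : ℕ} (hi : i < m) (hp : p < m + n - 1)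
    (a : ℕ → A) :
    ∃ Φ : A →ₗ[K] A, ∀ z,
      toCochain m f (compSeq α n (toCochain n g) i (update a p z)) = Φ z := by
  let slot := f.toLinearMap fun j : Fin m => compSeq α n (toCochain n g) i a j
  by_cases h₁ : p < i
  · refine ⟨slot ⟨p, by omega⟩ ∘ₗ α ^ (n - 1), fun z => ?_⟩
    rw [compSeq_update_of_lt _ _ _ _ h₁, toCochain_update f _ (by omega), LinearMap.comp_apply,
      Module.End.pow_apply]
  by_cases h₂ : p < i + n
  · refine ⟨slot ⟨i, hi⟩ ∘ₗ g.toLinearMap (fun k : Fin n => a (i + k)) ⟨p - i, by omega⟩,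
      fun z => ?_⟩
    rw [toCochain_compSeq_update_window α f g (by omega) h₂, toCochain_update f _ hi,
      toCochain_update g _ (by omega), LinearMap.comp_apply]
  · refine ⟨slot ⟨p - n + 1, by omega⟩ ∘ₗ α ^ (n - 1), fun z => ?_⟩
    rw [toCochain_compSeq_update_of_le α f g (by omega), toCochain_update f _ (by omega),
      LinearMap.comp_apply, Module.End.pow_apply]

def circMultilinear : MultilinearMap K (fun _ : Fin (m + n - 1) => A) A where
  toFun v := circ α m n (toCochain m f) (toCochain n g) (zeroExtend v)
  map_update_add' v t x y := by
    simp only [zeroExtend_update, circ_eq, ← sum_add_distrib, ← smul_add]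
    refine sum_congr rfl fun i hi => ?_
    obtain ⟨Φ, hΦ⟩ := exists_linearMap_compSeq_update α f g (mem_range.mp hi) t.isLt
      (zeroExtend v)
    rw [hΦ, hΦ, hΦ, map_add]
  map_update_smul' v t c x := by
    simp only [zeroExtend_update, circ_eq, smul_sum]
    refine sum_congr rfl fun i hi => ?_
    obtain ⟨Φ, hΦ⟩ := exists_linearMap_compSeq_update α f g (mem_range.mp hi) t.isLt
      (zeroExtend v)
    rw [hΦ, hΦ, map_smul, smul_comm]

theorem toCochain_circMultilinear (hn : 1 ≤ n) (a : ℕ → A) :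
    toCochain (m + n - 1) (circMultilinear α f g) a
      = circ α m n (toCochain m f) (toCochain n g) a := by
  change circ α m n (toCochain m f) (toCochain n g) (zeroExtend fun j : Fin (m + n - 1) => a j) = _
  simp only [circ_eq]
  refine sum_congr rfl fun i hi => ?_
  rw [toCochain_compSeq_congr α f g hn (mem_range.mp hi)
    fun j hj => zeroExtend_of_lt _ hj]

theorem map_circMultilinear (hf : ∀ v : Fin m → A, α (f v) = f fun t => α (v t))
    (hg : ∀ v : Fin n → A, α (g v) = g fun t => α (v t)) (v : Fin (m + n - 1) → A) :
    α (circMultilinear α f g v) = circMultilinear α f g fun t => α (v t) := by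
  simp only [circMultilinear, MultilinearMap.coe_mk, circ_eq, map_sum, map_zsmul,
    map_toCochain f hf, compSeq_map α g hg, zeroExtend_map]

end CircMultilinear

end HomCochain

open HomCochain

theorem cup_graded_comm_up_to_coboundary_general {K A : Type*} [Field K] [AddCommGroup A] [Module K A]
    (μ : A →ₗ[K] A →ₗ[K] A) (α : A →ₗ[K] A)
    (hαμ : ∀ a b : A, α (μ a b) = μ (α a) (α b))
    (m n : ℕ) (hm : 1 ≤ m) (hn : 1 ≤ n)
    (f : MultilinearMap K (fun _ : Fin m => A) A)
    (g : MultilinearMap K (fun _ : Fin n => A) A)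
    (hf : ∀ a : Fin m → A, α (f a) = f fun t => α (a t))
    (hg : ∀ a : Fin n → A, α (g a) = g fun t => α (a t))
    (hfz : ∀ a : ℕ → A, hdelta (fun x y => μ x y) (⇑α) m (toCochain m f) a = 0)
    (hgz : ∀ a : ℕ → A, hdelta (fun x y => μ x y) (⇑α) n (toCochain n g) a = 0) :
    ∃ h : MultilinearMap K (fun _ : Fin (m + n - 1) => A) A,
      (∀ b : Fin (m + n - 1) → A, α (h b) = h fun t => α (b t)) ∧
      ∀ a : ℕ → A,
        cup (fun x y => μ x y) (⇑α) m n (toCochain m f) (toCochain n g) a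
            - ((-1 : ℤ) ^ (m * n)) •
                cup (fun x y => μ x y) (⇑α) n m (toCochain n g) (toCochain m f) a
          = hdelta (fun x y => μ x y) (⇑α) (m + n - 1) (toCochain (m + n - 1) h) a := by
  refine ⟨((-1 : ℤ) ^ ((m - 1) * n + 1)) • circMultilinear α f g, fun b => ?_, fun a => ?_⟩
  · rw [smul_apply, smul_apply, map_zsmul, map_circMultilinear α f g hf hg]
  · have hcirc : toCochain (m + n - 1) (((-1 : ℤ) ^ ((m - 1) * n + 1)) • circMultilinear α f g)
        = fun b => ((-1 : ℤ) ^ ((m - 1) * n + 1)) • circ α m n (toCochain m f) (toCochain n g) b :=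
      funext fun b => congrArg _ (toCochain_circMultilinear α f g hn b)
    rw [hcirc, hdelta_zsmul, hdelta_circ_of_cocycles μ α f g hm hn hαμ hg hfz hgz, smul_add,
      smul_smul, smul_smul, ← pow_add, ← pow_add]
    obtain ⟨q, rfl⟩ := Nat.exists_eq_add_of_le' hm
    rw [Nat.add_sub_cancel, Even.neg_one_pow ⟨q * n + 1, rfl⟩, one_smul,
      show q * n + 1 + n = (q + 1) * n + 1 by ring, neg_one_pow_succ_smul, sub_eq_add_neg]

/-- Let `(A, μ, α)` be a hom-associative algebra. The `α`-twisted cup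
product is graded commutative up to coboundary: if `f ∈ C^m_α(A,A)` and `g ∈ C^n_α(A,A)`
are cocycles, then `f ∪_α g - (-1)^{mn} g ∪_α f` lies in the image of
`δ_α : C^{m+n-1}_α(A,A) → C^{m+n}_α(A,A)`. -/
theorem cup_graded_comm_up_to_coboundary {K A : Type*} [Field K] [AddCommGroup A] [Module K A]
    (μ : A →ₗ[K] A →ₗ[K] A) (α : A →ₗ[K] A)
    (hαμ : ∀ a b : A, α (μ a b) = μ (α a) (α b))
    (hassoc : ∀ a b c : A, μ (α a) (μ b c) = μ (μ a b) (α c))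
    (m n : ℕ) (hm : 1 ≤ m) (hn : 1 ≤ n)
    (f : MultilinearMap K (fun _ : Fin m => A) A)
    (g : MultilinearMap K (fun _ : Fin n => A) A)
    (hf : ∀ a : Fin m → A, α (f a) = f fun t => α (a t))
    (hg : ∀ a : Fin n → A, α (g a) = g fun t => α (a t))
    (hfz : ∀ a : ℕ → A, hdelta (fun x y => μ x y) (⇑α) m (toCochain m f) a = 0)
    (hgz : ∀ a : ℕ → A, hdelta (fun x y => μ x y) (⇑α) n (toCochain n g) a = 0) :
    ∃ h : MultilinearMap K (fun _ : Fin (m + n - 1) => A) A,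
      (∀ b : Fin (m + n - 1) → A, α (h b) = h fun t => α (b t)) ∧
      ∀ a : ℕ → A,
        cup (fun x y => μ x y) (⇑α) m n (toCochain m f) (toCochain n g) a
            - ((-1 : ℤ) ^ (m * n)) •
                cup (fun x y => μ x y) (⇑α) n m (toCochain n g) (toCochain m f) a
          = hdelta (fun x y => μ x y) (⇑α) (m + n - 1) (toCochain (m + n - 1) h) a :=
  cup_graded_comm_up_to_coboundary_general μ α hαμ m n hm hn f g hf hg hfz hgz
end

section
/- Let D be a set. The face maps d_i : Y_n → Y_{n-1} (0 ≤ i ≤ n) on planar binary trees, which delete the i-th leaf, satisfy the pre-operadic identities: (i) R_0(k; 1,…,1) = id on Y_k; (ii) R_0(k; n_1,…,n_k) ∘ R_0(n_1+⋯+n_k; m_1,…,m_{n_1+⋯+n_k}) = R_0(k; m_1+⋯+m_{n_1}, m_{n_1+1}+⋯+m_{n_1+n_2}, …, m_{n_1+⋯+n_{k-1}+1}+⋯+m_{n_1+⋯+n_k}); (iii) R_i(k; n_1,…,n_k) ∘ R_0(n_1+⋯+n_k; m_1,…,m_{n_1+⋯+n_k}) = R_0(n_i; m_{n_1+⋯+n_{i-1}+1},…,m_{n_1+⋯+n_i})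 ∘ R_i(k; m_1+⋯+m_{n_1}, …, m_{n_1+⋯+n_{k-1}+1}+⋯+m_{n_1+⋯+n_k}); (iv) R_{n_1+⋯+n_{i-1}+j}(n_1+⋯+n_k; m_1,…,m_{n_1+⋯+n_k}) = R_j(n_i; m_{n_1+⋯+n_{i-1}+1},…,m_{n_1+⋯+n_i}) ∘ R_i(k; m_1+⋯+m_{n_1}, …, m_{n_1+⋯+n_{k-1}+1}+⋯+m_{n_1+⋯+n_k}), for all k, n_1,…,n_k, m_1,…,m_{n_1+⋯+n_k} ≥ 1 and 1 ≤ i ≤ k, 1 ≤ j ≤ n_i. -/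
/-! Planar binary trees: `PBTree.vert` counts internal (trivalent) vertices, so
`Y_n = {y : PBTree // y.vert = n}` with the `n+1` leaves labelled `0,…,n` from left to
right.  `PBTree.del y i` is the face map `d_i`, deleting the `i`-th leaf.
`Rmap0 k n` and `Rmapi k n i` are the composites `R_0(k; n_1,…,n_k)` and
`R_i(k; n_1,…,n_k)` of face maps (the sequence `n_1,…,n_k` is encoded as the function
`n : ℕ → ℕ`, `psum n i = n_1 + ⋯ + n_i`). -/

inductive PBTree : Type
  | leaf : PBTree
  | node : PBTree → PBTree → PBTree
  deriving DecidableEq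

namespace PBTree

def vert : PBTree → ℕ
  | leaf => 0
  | node l r => vert l + vert r + 1

def del : PBTree → ℕ → PBTree
  | leaf, _ => leaf
  | node l r, i =>
    if i ≤ l.vert then
      match l with
      | leaf => r
      | node a b => node ((node a b).del i) r
    else
      match r with
      | leaf => l
      | node a b => node l ((node a b).del (i - l.vert - 1))

def faceList : List ℕ → PBTree → PBTree
  | [], y => y
  | i :: rest, y => (faceList rest y).del i

def leafLeft : PBTree → ℕ → Bool
  | leaf, _ => false
  | node l r, i =>
    if i ≤ l.vert then
      match l with
      | leaf => true
      | node a b => (node a b).leafLeft i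
    else
      match r with
      | leaf => false
      | node a b => (node a b).leafLeft (i - l.vert - 1)

end PBTree

def psum (n : ℕ → ℕ) (i : ℕ) : ℕ := ∑ j ∈ Finset.range i, n (j + 1)

def R0list (k : ℕ) (n : ℕ → ℕ) : List ℕ :=
  (List.range (psum n k + 1)).filter fun j =>
    decide (∀ i < k + 1, psum n i ≠ j)

def Rilist (k : ℕ) (n : ℕ → ℕ) (i : ℕ) : List ℕ :=
  (List.range (psum n k + 1)).filter fun j =>
    decide (j < psum n (i - 1) ∨ psum n i < j)

def Rmap0 (k : ℕ) (n : ℕ → ℕ) (y : PBTree) : PBTree := PBTree.faceList (R0list k n) y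

def Rmapi (k : ℕ) (n : ℕ → ℕ) (i : ℕ) (y : PBTree) : PBTree :=
  PBTree.faceList (Rilist k n i) y

def blockSum (n m : ℕ → ℕ) (i : ℕ) : ℕ :=
  ∑ j ∈ Finset.range (n i), m (psum n (i - 1) + j + 1)

/-! A composite of face maps deleting a set of leaves is the restriction of the tree to the
remaining leaves.  If the remaining leaves are `f 0 < ⋯ < f a`, the leaf `f t` is the `t`-th
remaining one, so restricting along `f` and then along `g : {0,…,b} → {0,…,a}` is restricting
along `f ∘ g`.  `R_0(k; n⃗)` keeps the leaves `psum n t` (`t ≤ k`) and `R_i(k; n⃗)` keeps the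
leaves `psum n (i-1) + t` (`t ≤ n_i`), so each identity becomes an identity between composites
of partial-sum maps. -/

open Set

section PartialSums

lemma psum_succ (m : ℕ → ℕ) (a : ℕ) : psum m (a + 1) = psum m a + m (a + 1) :=
  Finset.sum_range_succ _ _

lemma psum_add (m : ℕ → ℕ) (a b : ℕ) :
    psum m (a + b) = psum m a + psum (fun l => m (a + l)) b := by
  rw [psum, Finset.sum_range_add]
  rfl

lemma psum_sub_one_add {n : ℕ → ℕ} {i : ℕ} (hi : 1 ≤ i) : psum n (i - 1) + n i = psum n i := by
  obtain ⟨i, rfl⟩ := Nat.exists_eq_add_of_le' hi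
  rw [psum_succ, Nat.add_sub_cancel]

lemma psum_const_one (t : ℕ) : psum (fun _ => 1) t = t := by simp [psum]

lemma psum_mono (m : ℕ → ℕ) : Monotone (psum m) := fun _ _ h =>
  Finset.sum_le_sum_of_subset (Finset.range_subset_range.2 h)

lemma strictMonoOn_psum {m : ℕ → ℕ} {N : ℕ} (hm : ∀ j, 1 ≤ j → j ≤ N → 1 ≤ m j) :
    StrictMonoOn (psum m) (Iic N) :=
  strictMonoOn_of_lt_add_one ordConnected_Iic fun a _ _ ha => by
    have := hm (a + 1) (by omega) ha
    rw [psum_succ]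
    omega

lemma blockSum_eq_psum (n m : ℕ → ℕ) (i : ℕ) :
    blockSum n m i = psum (fun l => m (psum n (i - 1) + l)) (n i) := rfl

lemma psum_blockSum (n m : ℕ → ℕ) (s : ℕ) : psum (blockSum n m) s = psum m (psum n s) := by
  induction s with
  | zero => rfl
  | succ s ih => rw [psum_succ, ih, psum_succ n, psum_add, blockSum_eq_psum, Nat.add_sub_cancel]

lemma psum_comp_psum (n m : ℕ → ℕ) : psum m ∘ psum n = psum (blockSum n m) :=
  funext fun s => (psum_blockSum n m s).symm

lemma psum_comp_const_add (m : ℕ → ℕ) (c : ℕ) :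
    psum m ∘ (c + ·) = (psum m c + ·) ∘ psum (fun l => m (c + l)) :=
  funext fun t => psum_add m c t

lemma mapsTo_psum_sub_one_add {n : ℕ → ℕ} {i k : ℕ} (hi : 1 ≤ i) (hik : i ≤ k) :
    MapsTo (psum n (i - 1) + ·) (Iic (n i)) (Iic (psum n k)) := fun t ht => by
  have := psum_sub_one_add (n := n) hi
  have := psum_mono n hik
  simp only [mem_Iic] at ht ⊢
  omega

lemma const_add_comp_const_add (a b : ℕ) : (a + ·) ∘ (b + ·) = (a + b + ·) :=
  funext fun t => (add_assoc a b t).symm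

end PartialSums

namespace PBTree

def graft : Option PBTree → Option PBTree → Option PBTree
  | some a, some b => some (node a b)
  | a, none => a
  | none, b => b

def leafCount : Option PBTree → ℕ
  | none => 0
  | some y => y.vert + 1

/-- The subtree spanned by the leaves `j` with `p j`, or `none` if there are none. -/
noncomputable def restrict : PBTree → (ℕ → Prop) → Option PBTree
  | leaf, p => by classical exact if p 0 then some leaf else none
  | node l r, p => graft (l.restrict p) (r.restrict fun j => p (l.vert + 1 + j))

@[simp] lemma graft_none (a : Option PBTree) : graft a none = a := by cases a <;> rfl

@[simp] lemma none_graft (b : Option PBTree) : graft none b = b := by cases b <;> rfl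

lemma leafCount_graft (a b : Option PBTree) :
    leafCount (graft a b) = leafCount a + leafCount b := by
  rcases a with _ | a <;> rcases b with _ | b <;> simp +arith [graft, leafCount, vert]

lemma leafCount_restrict (y : PBTree) (p : ℕ → Prop) [DecidablePred p] :
    leafCount (y.restrict p) = Nat.count p (y.vert + 1) := by
  induction y generalizing p with
  | leaf => by_cases h : p 0 <;> simp [restrict, h, leafCount, vert, Nat.count_one]
  | node l r ihl ihr =>
    rw [restrict, leafCount_graft, ihl, ihr, vert,
      show l.vert + r.vert + 1 + 1 = l.vert + 1 + (r.vert + 1) by ring,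
      Nat.count_add p (l.vert + 1)]

lemma restrict_congr {y : PBTree} {p q : ℕ → Prop} (h : ∀ j ≤ y.vert, p j ↔ q j) :
    y.restrict p = y.restrict q := by
  induction y generalizing p q with
  | leaf =>
    by_cases hp : p 0
    · simp [restrict, hp, (h 0 le_rfl).1 hp]
    · simp [restrict, hp, mt (h 0 le_rfl).2 hp]
  | node l r ihl ihr =>
    simp only [vert] at h
    rw [restrict, restrict, ihl fun j hj => h j (by omega), ihr fun j hj => h _ (by omega)]

lemma restrict_eq_self {y : PBTree} {p : ℕ → Prop} (h : ∀ j ≤ y.vert, p j) :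
    y.restrict p = some y := by
  induction y generalizing p with
  | leaf => simp [restrict, h 0 le_rfl]
  | node l r ihl ihr =>
    simp only [vert] at h
    rw [restrict, ihl fun j hj => h j (by omega), ihr fun j hj => h _ (by omega)]
    rfl

lemma bind_graft_restrict (a b : Option PBTree) (q : ℕ → Prop) :
    (graft a b).bind (·.restrict q) =
      graft (a.bind (·.restrict q)) (b.bind (·.restrict fun j => q (leafCount a + j))) := by
  rcases a with _ | a <;> rcases b with _ | b
  · rfl
  · simp [leafCount]
  · simp
  · rfl

/-- Restricting twice: the leaf `j` survives the first restriction as leaf number `count p j`. -/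
lemma bind_restrict_restrict (y : PBTree) (p q : ℕ → Prop) [DecidablePred p] :
    (y.restrict p).bind (·.restrict q) = y.restrict fun j => p j ∧ q (Nat.count p j) := by
  induction y generalizing p q with
  | leaf => by_cases hp : p 0 <;> by_cases hq : q 0 <;> simp [restrict, hp, hq]
  | node l r ihl ihr =>
    rw [restrict, restrict, bind_graft_restrict, ihl, ihr, leafCount_restrict]
    simp only [Nat.count_add]

lemma restrict_del {y : PBTree} {i : ℕ} (hy : y ≠ leaf) (hi : i ≤ y.vert) :
    y.restrict (· ≠ i) = some (y.del i) := by
  induction y generalizing i with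
  | leaf => exact absurd rfl hy
  | node l r ihl ihr =>
    simp only [vert] at hi
    by_cases hil : i ≤ l.vert
    · have hr : r.restrict (fun j => l.vert + 1 + j ≠ i) = some r :=
        restrict_eq_self fun j _ => by omega
      rcases l with _ | ⟨a, b⟩
      · obtain rfl : i = 0 := by simpa [vert] using hil
        rw [restrict, hr, del.eq_def]
        simp [restrict, vert]
      · rw [restrict, ihl (by simp) hil, hr]
        conv_rhs => rw [del.eq_def]
        simp [graft, hil]
    · have hl : l.restrict (· ≠ i) = some l := restrict_eq_self fun j _ => by omega
      rcases r with _ | ⟨a, b⟩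
      · obtain rfl : i = l.vert + 1 := by simp [vert] at hi; omega
        rw [restrict, hl, del.eq_def]
        simp [restrict]
      · have hshift : (fun j => l.vert + 1 + j ≠ i) = (· ≠ i - l.vert - 1) :=
          funext fun j => propext (by omega)
        rw [restrict, hl, hshift, ihr (by simp) (by simp [vert] at hi ⊢; omega)]
        conv_rhs => rw [del.eq_def]
        simp [graft, hil]

/-- `faceList` deletes the largest index first, so the leaves still to be deleted keep their
indices. -/
lemma restrict_faceList {y : PBTree} {L : List ℕ} {x : ℕ} (hL : L.Pairwise (· < ·))
    (hLy : ∀ i ∈ L, i ≤ y.vert) (hx : x ≤ y.vert) (hxL : x ∉ L) :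
    y.restrict (· ∉ L) = some (faceList L y) := by
  induction L with
  | nil => exact restrict_eq_self fun j _ => List.not_mem_nil
  | cons i rest ih =>
    obtain ⟨hgt, hrest⟩ := List.pairwise_cons.1 hL
    simp only [List.mem_cons, not_or] at hxL
    have hy₀ := ih hrest (fun j hj => hLy j (List.mem_cons_of_mem i hj)) hxL.2
    set y₀ := faceList rest y
    have hcount : y₀.vert + 1 = Nat.count (· ∉ rest) (y.vert + 1) := by
      simpa [hy₀, leafCount] using leafCount_restrict y (· ∉ rest)
    have hinit : ∀ j ≤ i + 1, Nat.count (· ∉ rest) j = j := fun j hj =>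
      Nat.count_of_forall fun t ht ht' => by have := hgt t ht'; omega
    have hiy : i ≤ y.vert := hLy i List.mem_cons_self
    have hi : i + 1 ≤ y₀.vert + 1 := by
      rw [hcount, ← hinit (i + 1) le_rfl]; exact Nat.count_monotone _ (by omega)
    have hy₀leaf : y₀ ≠ leaf := by
      rintro h
      have h1 : Nat.count (· ∉ rest) (y.vert + 1) = 1 := by rw [← hcount, h]; rfl
      have hx1 : 1 ≤ x := by simp [h, vert] at hi; omega
      have h2 : Nat.count (· ∉ rest) x < Nat.count (· ∉ rest) (x + 1) :=
        Nat.count_lt_count_succ_iff.2 hxL.2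
      have h3 := Nat.count_monotone (· ∉ rest) hx1
      have h4 := Nat.count_monotone (· ∉ rest) (show x + 1 ≤ y.vert + 1 by omega)
      rw [hinit 1 (by omega)] at h3
      omega
    have hpred : (· ∉ i :: rest) = fun j => j ∉ rest ∧ Nat.count (· ∉ rest) j ≠ i := by
      funext j
      refine propext ⟨fun hj => ?_, fun ⟨hj, hc⟩ => ?_⟩
      · simp only [List.mem_cons, not_or] at hj
        refine ⟨hj.2, fun hc => hj.1 ?_⟩
        rcases Nat.lt_or_ge i j with hij | hij
        · have := Nat.count_monotone (· ∉ rest) hij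
          rw [hinit (i + 1) le_rfl] at this; omega
        · have := hinit j (by omega); omega
      · simp only [List.mem_cons, not_or]
        exact ⟨fun h => hc (h ▸ hinit j (by omega)), hj⟩
    rw [hpred, ← bind_restrict_restrict y (· ∉ rest) (· ≠ i), hy₀]
    exact restrict_del hy₀leaf (by omega)

section Image

open Classical

variable {f g : ℕ → ℕ} {a b : ℕ}

lemma count_mem_image (hf : StrictMonoOn f (Iic a)) {c t : ℕ} (ht : t ≤ a + 1)
    (hc : ∀ s ≤ a, f s < c ↔ s < t) : Nat.count (· ∈ f '' Iic a) c = t := by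
  have hfilter : {j ∈ Finset.range c | j ∈ f '' Iic a} = (Finset.range t).image f := by
    ext j
    simp only [Finset.mem_filter, Finset.mem_range, Finset.mem_image, mem_image, mem_Iic]
    constructor
    · rintro ⟨hj, s, hs, rfl⟩
      exact ⟨s, (hc s hs).1 hj, rfl⟩
    · rintro ⟨s, hs, rfl⟩
      exact ⟨(hc s (by omega)).2 hs, s, by omega, rfl⟩
  rw [Nat.count_eq_card_filter_range, hfilter, Finset.card_image_of_injOn, Finset.card_range]
  exact hf.injOn.mono fun s hs => by simp at hs ⊢; omega

lemma count_mem_image_apply (hf : StrictMonoOn f (Iic a)) {t : ℕ} (ht : t ≤ a) :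
    Nat.count (· ∈ f '' Iic a) (f t) = t :=
  count_mem_image hf (by omega) fun s hs => hf.lt_iff_lt hs ht

lemma count_mem_image_of_lt (hf : StrictMonoOn f (Iic a)) {c : ℕ} (hc : f a < c) :
    Nat.count (· ∈ f '' Iic a) c = a + 1 :=
  count_mem_image hf le_rfl fun s hs =>
    ⟨fun _ => by omega, fun _ => (hf.monotoneOn hs (mem_Iic.2 le_rfl) hs).trans_lt hc⟩

lemma mem_image_and_count_mem_image_iff (hf : StrictMonoOn f (Iic a))
    (hg : MapsTo g (Iic b) (Iic a)) (j : ℕ) :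
    (j ∈ f '' Iic a ∧ Nat.count (· ∈ f '' Iic a) j ∈ g '' Iic b) ↔ j ∈ (f ∘ g) '' Iic b := by
  constructor
  · rintro ⟨⟨t, ht, rfl⟩, hcount⟩
    rw [count_mem_image_apply hf ht] at hcount
    obtain ⟨s, hs, rfl⟩ := hcount
    exact ⟨s, hs, rfl⟩
  · rintro ⟨s, hs, rfl⟩
    refine ⟨⟨g s, hg hs, rfl⟩, ?_⟩
    rw [Function.comp_apply, count_mem_image_apply hf (hg hs)]
    exact ⟨s, hs, rfl⟩

lemma restrict_image_comp {y z : PBTree} (hf : StrictMonoOn f (Iic a))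
    (hg : MapsTo g (Iic b) (Iic a)) (h : y.restrict (· ∈ f '' Iic a) = some z) :
    z.restrict (· ∈ g '' Iic b) = y.restrict (· ∈ (f ∘ g) '' Iic b) := by
  calc z.restrict (· ∈ g '' Iic b)
      = (y.restrict (· ∈ f '' Iic a)).bind (·.restrict (· ∈ g '' Iic b)) := by rw [h]; rfl
    _ = y.restrict (· ∈ (f ∘ g) '' Iic b) := by
      rw [bind_restrict_restrict]
      exact congrArg _ (funext fun j => propext (mem_image_and_count_mem_image_iff hf hg j))

lemma vert_of_restrict_image {y z : PBTree} (hf : StrictMonoOn f (Iic a)) (ha : f a ≤ y.vert)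
    (h : y.restrict (· ∈ f '' Iic a) = some z) : z.vert = a := by
  have := leafCount_restrict y (· ∈ f '' Iic a)
  rw [h, count_mem_image_of_lt hf (by omega)] at this
  simpa [leafCount] using this

end Image

end PBTree

section FaceMaps

open PBTree

variable {y : PBTree} {k N i : ℕ} {n m : ℕ → ℕ}

lemma mem_R0list {j : ℕ} : j ∈ R0list k n ↔ j ≤ psum n k ∧ j ∉ psum n '' Iic k := by
  simp only [R0list, List.mem_filter, List.mem_range, decide_eq_true_eq, mem_image, mem_Iic,
    not_exists, not_and]
  exact and_congr Nat.lt_succ_iff ⟨fun h t ht => h t (by omega), fun h t ht => h t (by omega)⟩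

lemma mem_Rilist {j : ℕ} :
    j ∈ Rilist k n i ↔ j ≤ psum n k ∧ (j < psum n (i - 1) ∨ psum n i < j) := by
  simp only [Rilist, List.mem_filter, List.mem_range, decide_eq_true_eq, Nat.lt_succ_iff]

lemma mem_image_const_add_Iic {c d j : ℕ} : j ∈ (c + ·) '' Iic d ↔ c ≤ j ∧ j ≤ c + d :=
  ⟨fun ⟨t, ht, e⟩ => by simp only [mem_Iic] at ht; simp only at e; omega,
    fun h => ⟨j - c, by simp only [mem_Iic]; omega, show c + (j - c) = j by omega⟩⟩

lemma restrict_Rmap0 (hy : y.vert = psum m N) :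
    y.restrict (· ∈ psum m '' Iic N) = some (Rmap0 N m y) := by
  rw [restrict_congr (q := (· ∉ R0list N m)) fun j hj => by
    rw [mem_R0list, not_and, not_not]
    exact ⟨fun h _ => h, fun h => h (hy ▸ hj)⟩]
  exact restrict_faceList (List.pairwise_lt_range.filter _)
    (fun j hj => hy ▸ (mem_R0list.1 hj).1) (Nat.zero_le _)
    (fun h => (mem_R0list.1 h).2 ⟨0, Nat.zero_le _, rfl⟩)

lemma restrict_Rmapi (hy : y.vert = psum n k) (hi : 1 ≤ i) (hik : i ≤ k) :
    y.restrict (· ∈ (psum n (i - 1) + ·) '' Iic (n i)) = some (Rmapi k n i y) := by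
  have hend := psum_sub_one_add (n := n) hi
  have hik' := psum_mono n hik
  rw [restrict_congr (q := (· ∉ Rilist k n i)) fun j hj => by
    rw [mem_image_const_add_Iic, mem_Rilist]
    omega]
  exact restrict_faceList (List.pairwise_lt_range.filter _)
    (fun j hj => hy ▸ (mem_Rilist.1 hj).1) (x := psum n (i - 1)) (by omega)
    (fun h => by rw [mem_Rilist] at h; omega)

lemma vert_Rmap0 (hm : ∀ j, 1 ≤ j → j ≤ N → 1 ≤ m j) (hy : y.vert = psum m N) :
    (Rmap0 N m y).vert = N :=
  vert_of_restrict_image (strictMonoOn_psum hm) hy.ge (restrict_Rmap0 hy)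

lemma vert_Rmapi (hy : y.vert = psum n k) (hi : 1 ≤ i) (hik : i ≤ k) :
    (Rmapi k n i y).vert = n i :=
  vert_of_restrict_image (add_right_strictMono.strictMonoOn _)
    (by rw [psum_sub_one_add hi, hy]; exact psum_mono n hik) (restrict_Rmapi hy hi hik)

lemma Rmap0_const_one (hy : y.vert = k) : Rmap0 k (fun _ => 1) y = y := by
  apply Option.some.inj
  rw [← restrict_Rmap0 (hy.trans (psum_const_one k).symm)]
  exact restrict_eq_self fun j hj => ⟨j, hy ▸ hj, psum_const_one j⟩

lemma Rmap0_Rmap0 (hm : ∀ j, 1 ≤ j → j ≤ psum n k → 1 ≤ m j)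
    (hy : y.vert = psum m (psum n k)) :
    Rmap0 k n (Rmap0 (psum n k) m y) = Rmap0 k (blockSum n m) y := by
  apply Option.some.inj
  rw [← restrict_Rmap0 (vert_Rmap0 hm hy),
    restrict_image_comp (strictMonoOn_psum hm) (psum_mono n).mapsTo_Iic (restrict_Rmap0 hy),
    ← restrict_Rmap0 (hy.trans (psum_blockSum n m k).symm), psum_comp_psum]

lemma Rmapi_Rmap0 (hi : 1 ≤ i) (hik : i ≤ k) (hm : ∀ j, 1 ≤ j → j ≤ psum n k → 1 ≤ m j)
    (hy : y.vert = psum m (psum n k)) :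
    Rmapi k n i (Rmap0 (psum n k) m y)
      = Rmap0 (n i) (fun j => m (psum n (i - 1) + j)) (Rmapi k (blockSum n m) i y) := by
  have hyB : y.vert = psum (blockSum n m) k := hy.trans (psum_blockSum n m k).symm
  apply Option.some.inj
  rw [← restrict_Rmapi (vert_Rmap0 hm hy) hi hik,
    ← restrict_Rmap0 (m := fun l => m (psum n (i - 1) + l)) (N := n i)
      (vert_Rmapi (n := blockSum n m) hyB hi hik),
    restrict_image_comp (strictMonoOn_psum hm) (mapsTo_psum_sub_one_add hi hik)
      (restrict_Rmap0 hy),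
    restrict_image_comp (add_right_strictMono.strictMonoOn _) (psum_mono _).mapsTo_Iic
      (restrict_Rmapi (n := blockSum n m) hyB hi hik), psum_comp_const_add, psum_blockSum]

lemma Rmapi_psum_sub_one_add {j : ℕ} (hi : 1 ≤ i) (hik : i ≤ k) (hj : 1 ≤ j) (hjn : j ≤ n i)
    (hy : y.vert = psum m (psum n k)) :
    Rmapi (psum n k) m (psum n (i - 1) + j) y
      = Rmapi (n i) (fun l => m (psum n (i - 1) + l)) j (Rmapi k (blockSum n m) i y) := by
  have hyB : y.vert = psum (blockSum n m) k := hy.trans (psum_blockSum n m k).symm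
  have hik' := psum_mono n hik
  have hi' := psum_sub_one_add (n := n) hi
  apply Option.some.inj
  rw [← restrict_Rmapi hy (by omega) (by omega),
    ← restrict_Rmapi (n := fun l => m (psum n (i - 1) + l)) (k := n i) (i := j)
      (vert_Rmapi (n := blockSum n m) hyB hi hik) hj hjn,
    restrict_image_comp (add_right_strictMono.strictMonoOn _) (mapsTo_psum_sub_one_add hj hjn)
      (restrict_Rmapi (n := blockSum n m) hyB hi hik),
    const_add_comp_const_add, psum_blockSum, ← psum_add,
    show psum n (i - 1) + j - 1 = psum n (i - 1) + (j - 1) by omega]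

end FaceMaps

theorem preoperadic_identities_general :
    (∀ k : ℕ, 1 ≤ k → ∀ y : PBTree, y.vert = k → Rmap0 k (fun _ => 1) y = y) ∧
    (∀ (k : ℕ) (n m : ℕ → ℕ), 1 ≤ k →
      (∀ i, 1 ≤ i → i ≤ k → 1 ≤ n i) →
      (∀ j, 1 ≤ j → j ≤ psum n k → 1 ≤ m j) →
      ∀ y : PBTree, y.vert = psum m (psum n k) →
        Rmap0 k n (Rmap0 (psum n k) m y) = Rmap0 k (blockSum n m) y) ∧
    (∀ (k : ℕ) (n m : ℕ → ℕ) (i : ℕ), 1 ≤ k → 1 ≤ i → i ≤ k →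
      (∀ i', 1 ≤ i' → i' ≤ k → 1 ≤ n i') →
      (∀ j, 1 ≤ j → j ≤ psum n k → 1 ≤ m j) →
      ∀ y : PBTree, y.vert = psum m (psum n k) →
        Rmapi k n i (Rmap0 (psum n k) m y)
          = Rmap0 (n i) (fun j => m (psum n (i - 1) + j)) (Rmapi k (blockSum n m) i y)) ∧
    (∀ (k : ℕ) (n m : ℕ → ℕ) (i j : ℕ), 1 ≤ k → 1 ≤ i → i ≤ k → 1 ≤ j → j ≤ n i →
      (∀ i', 1 ≤ i' → i' ≤ k → 1 ≤ n i') →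
      (∀ j', 1 ≤ j' → j' ≤ psum n k → 1 ≤ m j') →
      ∀ y : PBTree, y.vert = psum m (psum n k) →
        Rmapi (psum n k) m (psum n (i - 1) + j) y
          = Rmapi (n i) (fun l => m (psum n (i - 1) + l)) j
              (Rmapi k (blockSum n m) i y)) := by
  exact ⟨fun _ _ _ hy => Rmap0_const_one hy,
    fun _ _ _ _ _ hm _ hy => Rmap0_Rmap0 hm hy,
    fun _ _ _ _ _ hi hik _ hm _ hy => Rmapi_Rmap0 hi hik hm hy,
    fun _ _ _ _ _ _ hi hik hj hjn _ _ _ hy => Rmapi_psum_sub_one_add hi hik hj hjn hy⟩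

/-- The face maps `d_i : Y_n → Y_{n-1}` on planar binary trees satisfy
the pre-operadic identities:
(i) `R_0(k; 1,…,1) = id` on `Y_k`;
(ii) `R_0(k; n⃗) ∘ R_0(n_1+⋯+n_k; m⃗) = R_0(k; blocksums of m⃗)`;
(iii) `R_i(k; n⃗) ∘ R_0(n_1+⋯+n_k; m⃗) = R_0(n_i; shifted m⃗) ∘ R_i(k; blocksums of m⃗)`;
(iv) `R_{n_1+⋯+n_{i-1}+j}(n_1+⋯+n_k; m⃗) = R_j(n_i; shifted m⃗) ∘ R_i(k; blocksums of m⃗)`. -/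
theorem preoperadic_identities (D : Type*) :
    (∀ k : ℕ, 1 ≤ k → ∀ y : PBTree, y.vert = k → Rmap0 k (fun _ => 1) y = y) ∧
    (∀ (k : ℕ) (n m : ℕ → ℕ), 1 ≤ k →
      (∀ i, 1 ≤ i → i ≤ k → 1 ≤ n i) →
      (∀ j, 1 ≤ j → j ≤ psum n k → 1 ≤ m j) →
      ∀ y : PBTree, y.vert = psum m (psum n k) →
        Rmap0 k n (Rmap0 (psum n k) m y) = Rmap0 k (blockSum n m) y) ∧
    (∀ (k : ℕ) (n m : ℕ → ℕ) (i : ℕ), 1 ≤ k → 1 ≤ i → i ≤ k →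
      (∀ i', 1 ≤ i' → i' ≤ k → 1 ≤ n i') →
      (∀ j, 1 ≤ j → j ≤ psum n k → 1 ≤ m j) →
      ∀ y : PBTree, y.vert = psum m (psum n k) →
        Rmapi k n i (Rmap0 (psum n k) m y)
          = Rmap0 (n i) (fun j => m (psum n (i - 1) + j)) (Rmapi k (blockSum n m) i y)) ∧
    (∀ (k : ℕ) (n m : ℕ → ℕ) (i j : ℕ), 1 ≤ k → 1 ≤ i → i ≤ k → 1 ≤ j → j ≤ n i →
      (∀ i', 1 ≤ i' → i' ≤ k → 1 ≤ n i') →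
      (∀ j', 1 ≤ j' → j' ≤ psum n k → 1 ≤ m j') →
      ∀ y : PBTree, y.vert = psum m (psum n k) →
        Rmapi (psum n k) m (psum n (i - 1) + j) y
          = Rmapi (n i) (fun l => m (psum n (i - 1) + l)) j
              (Rmapi k (blockSum n m) i y)) :=
  preoperadic_identities_general
end

section
/- Let (D, ⊣, ⊢, α) be a hom-dialgebra over a field K, and let π ∈ CY^2_α(D,D) be defined by π([21]; a, b) = a ⊣ b and π([12]; a, b) = a ⊢ b. Then π is a multiplication on the operad CY^•_α(D,D): the twisted circle product satisfies (π ∘_1 π − π ∘_2 π)(y; a, b, c) = 0 for every 3-tree y ∈ Y_3 and all a, b, c ∈ D; explicitly, this expression equals (a ⊢ b) ⊢ α(c) − α(a) ⊢ (b ⊢ c) for y = [123], (a ⊣ b) ⊢ α(c) − α(a) ⊢ (b ⊢ c) for y = [213], (a ⊢ b) ⊣ α(c) − α(a) ⊢ (b ⊣ c) for y = [131], (a ⊣ b) ⊣ α(c) − α(a) ⊣ (b ⊢ c) for y = [312], and (a ⊣ b) ⊣ α(c) − α(a) ⊣ (b ⊣ c) for y = [321], and each of these vanishes by the hom-dialgebra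 axioms. -/
/-- `nfun n i` is the `m`-tuple `(1,…,1,n,1,…,1)` with `n` in the `i`-th place. -/
def nfun (n i : ℕ) : ℕ → ℕ := fun j => if j = i then n else 1

def ypcomp {D : Type*} (α : D → D) (m n i : ℕ) (f g : PBTree → (ℕ → D) → D) :
    PBTree → (ℕ → D) → D :=
  fun y a =>
    f (Rmap0 m (nfun n i) y) fun j =>
      if j + 1 < i then α^[n - 1] (a j)
      else if j + 1 = i then g (Rmapi m (nfun n i) i y) fun k => a (i - 1 + k)
      else α^[n - 1] (a (j + n - 1))

def t12 : PBTree := .node (.node .leaf .leaf) .leaf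
def t21 : PBTree := .node .leaf (.node .leaf .leaf)
def t123 : PBTree := .node (.node (.node .leaf .leaf) .leaf) .leaf
def t213 : PBTree := .node (.node .leaf (.node .leaf .leaf)) .leaf
def t131 : PBTree := .node (.node .leaf .leaf) (.node .leaf .leaf)
def t312 : PBTree := .node .leaf (.node (.node .leaf .leaf) .leaf)
def t321 : PBTree := .node .leaf (.node .leaf (.node .leaf .leaf))

def piC {D : Type*} [Zero D] (dl dr : D → D → D) : PBTree → (ℕ → D) → D :=
  fun y a => if y = t21 then dl (a 0) (a 1) else if y = t12 then dr (a 0) (a 1) else 0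

def piBr {D : Type*} [AddCommGroup D] (dl dr : D → D → D) (α : D → D)
    (y : PBTree) (a : ℕ → D) : D :=
  ypcomp α 2 2 1 (piC dl dr) (piC dl dr) y a - ypcomp α 2 2 2 (piC dl dr) (piC dl dr) y a

def tup3 {D : Type*} (a b c : D) : ℕ → D :=
  fun k => if k = 0 then a else if k = 1 then b else c

/-! In arity three the composites involve single face maps only: for `∘₁` the maps `R_0`, `R_1`
are `d₁`, `d₃`, and for `∘₂` the maps `R_0`, `R_2` are `d₂`, `d₀`. Hence
`(π ∘₁ π)(y; a, b, c) = π(d₁ y; π(d₃ y; a, b), α c)` and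
`(π ∘₂ π)(y; a, b, c) = π(d₂ y; α a, π(d₀ y; b, c))`, and evaluating these faces on the five trees
of `Y_3` turns `π ∘₁ π - π ∘₂ π` into the differences of the two sides of the five
hom-dialgebra axioms. -/

namespace PBTree

theorem vert_eq_zero_iff {y : PBTree} : y.vert = 0 ↔ y = leaf := by
  cases y <;> simp [vert]

theorem vert_eq_one_iff {y : PBTree} : y.vert = 1 ↔ y = node leaf leaf := by
  rcases y with _ | ⟨l, r⟩
  · simp [vert]
  · simp only [vert, node.injEq, ← vert_eq_zero_iff]
    omega

theorem vert_eq_two_iff {y : PBTree} : y.vert = 2 ↔ y = t12 ∨ y = t21 := by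
  rcases y with _ | ⟨l, r⟩
  · simp [vert, t12, t21]
  · have hsplit : l.vert + r.vert + 1 = 2 ↔
        (l.vert = 1 ∧ r.vert = 0) ∨ (l.vert = 0 ∧ r.vert = 1) := by
      omega
    simp only [vert, t12, t21, node.injEq, hsplit, vert_eq_zero_iff, vert_eq_one_iff]

theorem vert_eq_three_iff {y : PBTree} :
    y.vert = 3 ↔ y = t123 ∨ y = t213 ∨ y = t131 ∨ y = t312 ∨ y = t321 := by
  rcases y with _ | ⟨l, r⟩
  · simp [vert, t123, t213, t131, t312, t321]
  · have hsplit : l.vert + r.vert + 1 = 3 ↔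
        (l.vert = 2 ∧ r.vert = 0) ∨ (l.vert = 1 ∧ r.vert = 1) ∨ (l.vert = 0 ∧ r.vert = 2) := by
      omega
    simp only [vert, hsplit, vert_eq_zero_iff, vert_eq_one_iff, vert_eq_two_iff]
    simp only [t123, t213, t131, t312, t321, t12, t21, node.injEq, or_and_right, and_or_left,
      or_assoc]

end PBTree

theorem Rmap0_nfun_two_one (y : PBTree) : Rmap0 2 (nfun 2 1) y = y.del 1 := by
  rw [Rmap0, show R0list 2 (nfun 2 1) = [1] by decide]
  rfl

theorem Rmapi_nfun_two_one (y : PBTree) : Rmapi 2 (nfun 2 1) 1 y = y.del 3 := by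
  rw [Rmapi, show Rilist 2 (nfun 2 1) 1 = [3] by decide]
  rfl

theorem Rmap0_nfun_two_two (y : PBTree) : Rmap0 2 (nfun 2 2) y = y.del 2 := by
  rw [Rmap0, show R0list 2 (nfun 2 2) = [2] by decide]
  rfl

theorem Rmapi_nfun_two_two (y : PBTree) : Rmapi 2 (nfun 2 2) 2 y = y.del 0 := by
  rw [Rmapi, show Rilist 2 (nfun 2 2) 2 = [0] by decide]
  rfl

section TwistedCircleProduct

variable {D : Type*} (α : D → D) (f g : PBTree → (ℕ → D) → D) (y : PBTree) (a b c : D)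

theorem ypcomp_two_two_one_tup3 :
    ypcomp α 2 2 1 f g y (tup3 a b c) =
      f (y.del 1) (tup3 (g (y.del 3) (tup3 a b c)) (α c) (α c)) := by
  simp only [ypcomp, Rmap0_nfun_two_one, Rmapi_nfun_two_one]
  unfold tup3
  congr 1
  funext j
  rcases j with _ | _ | j <;> simp

theorem ypcomp_two_two_two_tup3 :
    ypcomp α 2 2 2 f g y (tup3 a b c) =
      f (y.del 2) (tup3 (α a) (g (y.del 0) (tup3 b c c)) (α c)) := by
  simp only [ypcomp, Rmap0_nfun_two_two, Rmapi_nfun_two_two]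
  congr 1
  funext j
  unfold tup3
  rcases j with _ | _ | j <;> simp [Nat.add_comm 1]

end TwistedCircleProduct

section Multiplication

variable {D : Type*} [AddCommGroup D] (dl dr : D → D → D) (α : D → D) (a b c : D)

theorem piBr_t123 : piBr dl dr α t123 (tup3 a b c) = dr (dr a b) (α c) - dr (α a) (dr b c) := by
  rw [piBr, ypcomp_two_two_one_tup3, ypcomp_two_two_two_tup3]
  rfl

theorem piBr_t213 : piBr dl dr α t213 (tup3 a b c) = dr (dl a b) (α c) - dr (α a) (dr b c) := by
  rw [piBr, ypcomp_two_two_one_tup3, ypcomp_two_two_two_tup3]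
  rfl

theorem piBr_t131 : piBr dl dr α t131 (tup3 a b c) = dl (dr a b) (α c) - dr (α a) (dl b c) := by
  rw [piBr, ypcomp_two_two_one_tup3, ypcomp_two_two_two_tup3]
  rfl

theorem piBr_t312 : piBr dl dr α t312 (tup3 a b c) = dl (dl a b) (α c) - dl (α a) (dr b c) := by
  rw [piBr, ypcomp_two_two_one_tup3, ypcomp_two_two_two_tup3]
  rfl

theorem piBr_t321 : piBr dl dr α t321 (tup3 a b c) = dl (dl a b) (α c) - dl (α a) (dl b c) := by
  rw [piBr, ypcomp_two_two_one_tup3, ypcomp_two_two_two_tup3]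
  rfl

end Multiplication

theorem pi_is_multiplication_general {K D : Type*} [Field K] [AddCommGroup D] [Module K D]
    (dl dr : D →ₗ[K] D →ₗ[K] D) (α : D →ₗ[K] D)
    (ax1 : ∀ a b c : D, dl (α a) (dl b c) = dl (dl a b) (α c))
    (ax2 : ∀ a b c : D, dl (dl a b) (α c) = dl (α a) (dr b c))
    (ax3 : ∀ a b c : D, dl (dr a b) (α c) = dr (α a) (dl b c))
    (ax4 : ∀ a b c : D, dr (dl a b) (α c) = dr (α a) (dr b c))
    (ax5 : ∀ a b c : D, dr (α a) (dr b c) = dr (dr a b) (α c)) :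
    ∀ a b c : D,
      piBr (fun x z => dl x z) (fun x z => dr x z) (⇑α) t123 (tup3 a b c)
          = dr (dr a b) (α c) - dr (α a) (dr b c) ∧
      piBr (fun x z => dl x z) (fun x z => dr x z) (⇑α) t213 (tup3 a b c)
          = dr (dl a b) (α c) - dr (α a) (dr b c) ∧
      piBr (fun x z => dl x z) (fun x z => dr x z) (⇑α) t131 (tup3 a b c)
          = dl (dr a b) (α c) - dr (α a) (dl b c) ∧
      piBr (fun x z => dl x z) (fun x z => dr x z) (⇑α) t312 (tup3 a b c)
          = dl (dl a b) (α c) - dl (α a) (dr b c) ∧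
      piBr (fun x z => dl x z) (fun x z => dr x z) (⇑α) t321 (tup3 a b c)
          = dl (dl a b) (α c) - dl (α a) (dl b c) ∧
      (∀ y : PBTree, y.vert = 3 →
        piBr (fun x z => dl x z) (fun x z => dr x z) (⇑α) y (tup3 a b c) = 0) := by
  intro a b c
  refine ⟨piBr_t123 .., piBr_t213 .., piBr_t131 .., piBr_t312 .., piBr_t321 .., fun y hy => ?_⟩
  rcases PBTree.vert_eq_three_iff.mp hy with rfl | rfl | rfl | rfl | rfl
  · rw [piBr_t123, ax5, sub_self]
  · rw [piBr_t213, ax4, sub_self]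
  · rw [piBr_t131, ax3, sub_self]
  · rw [piBr_t312, ax2, sub_self]
  · rw [piBr_t321, ← ax1, sub_self]

/-- Let `(D, ⊣, ⊢, α)` be a hom-dialgebra and `π ∈ CY^2_α(D,D)` be
given by `π([21]; a, b) = a ⊣ b` and `π([12]; a, b) = a ⊢ b`.  Then `π` is a
multiplication on the operad `CY^•_α(D,D)`: `(π ∘₁ π - π ∘₂ π)(y; a, b, c) = 0` for
every `y ∈ Y_3`; explicitly this expression equals
`(a ⊢ b) ⊢ α(c) - α(a) ⊢ (b ⊢ c)` for `y = [123]`,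
`(a ⊣ b) ⊢ α(c) - α(a) ⊢ (b ⊢ c)` for `y = [213]`,
`(a ⊢ b) ⊣ α(c) - α(a) ⊢ (b ⊣ c)` for `y = [131]`,
`(a ⊣ b) ⊣ α(c) - α(a) ⊣ (b ⊢ c)` for `y = [312]`,
`(a ⊣ b) ⊣ α(c) - α(a) ⊣ (b ⊣ c)` for `y = [321]`,
each of which vanishes by the hom-dialgebra axioms. -/
theorem pi_is_multiplication {K D : Type*} [Field K] [AddCommGroup D] [Module K D]
    (dl dr : D →ₗ[K] D →ₗ[K] D) (α : D →ₗ[K] D)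
    (hαl : ∀ a b : D, α (dl a b) = dl (α a) (α b))
    (hαr : ∀ a b : D, α (dr a b) = dr (α a) (α b))
    (ax1 : ∀ a b c : D, dl (α a) (dl b c) = dl (dl a b) (α c))
    (ax2 : ∀ a b c : D, dl (dl a b) (α c) = dl (α a) (dr b c))
    (ax3 : ∀ a b c : D, dl (dr a b) (α c) = dr (α a) (dl b c))
    (ax4 : ∀ a b c : D, dr (dl a b) (α c) = dr (α a) (dr b c))
    (ax5 : ∀ a b c : D, dr (α a) (dr b c) = dr (dr a b) (α c)) :
    ∀ a b c : D,
      piBr (fun x z => dl x z) (fun x z => dr x z) (⇑α) t123 (tup3 a b c)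
          = dr (dr a b) (α c) - dr (α a) (dr b c) ∧
      piBr (fun x z => dl x z) (fun x z => dr x z) (⇑α) t213 (tup3 a b c)
          = dr (dl a b) (α c) - dr (α a) (dr b c) ∧
      piBr (fun x z => dl x z) (fun x z => dr x z) (⇑α) t131 (tup3 a b c)
          = dl (dr a b) (α c) - dr (α a) (dl b c) ∧
      piBr (fun x z => dl x z) (fun x z => dr x z) (⇑α) t312 (tup3 a b c)
          = dl (dl a b) (α c) - dl (α a) (dr b c) ∧
      piBr (fun x z => dl x z) (fun x z => dr x z) (⇑α) t321 (tup3 a b c)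
          = dl (dl a b) (α c) - dl (α a) (dl b c) ∧
      (∀ y : PBTree, y.vert = 3 →
        piBr (fun x z => dl x z) (fun x z => dr x z) (⇑α) y (tup3 a b c) = 0) :=
  pi_is_multiplication_general dl dr α ax1 ax2 ax3 ax4 ax5
end
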